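/- arXiv:1802.02287 — 13 statements merged into one kernel-verified Lean document; each statement's English description precedes it below -/
import Mathlib

section
/- Let f : H → ℝ be Gâteaux differentiable on a real Hilbert space H, and suppose that ∇f is monotone and positively homogeneous. Then f(x) = (1/2)⟨x, ∇f(x)⟩ + f(0) for every x ∈ H. -/
open RealInnerProductSpace Pointwise

variable {H : Type*} [NormedAddCommGroup H] [InnerProductSpace ℝ H] [CompleteSpace H]

/-- `P` is the metric projection (nearest-point map) onto `C`. -/
def IsProjOn (C : Set H) (P : H → H) : Prop :=
  ∀ x, P x ∈ C ∧ ∀ y ∈ C, ‖x - P x‖ ≤ ‖x - y‖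

/-! Along the ray `t ↦ t • x` the homogeneity of `∇f` gives `d/dt f (t • x) = t ⟪∇f x, x⟫`
for `t ≥ 0`, so `f (t • x) - f 0 = (t² / 2) ⟪∇f x, x⟫`; take `t = 1`. -/

theorem map_zero_of_pos_homogeneous {E F : Type*} [AddCommGroup E] [Module ℝ E]
    [AddCommGroup F] [Module ℝ F] {g : E → F} (hg : ∀ x : E, ∀ t : ℝ, 0 < t → g (t • x) = t • g x) :
    g 0 = 0 := by
  have h := hg 0 2 two_pos
  rwa [smul_zero, two_smul, left_eq_add] at h

theorem hasDerivAt_comp_line {E : Type*} [NormedAddCommGroup E] [InnerProductSpace ℝ E]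
    {f : E → ℝ} {f' : E → E}
    (hdiff : ∀ x v : E, HasDerivAt (fun t : ℝ => f (x + t • v)) ⟪f' x, v⟫ 0) (x v : E) (t : ℝ) :
    HasDerivAt (fun s : ℝ => f (x + s • v)) ⟪f' (x + t • v), v⟫ t := by
  have h0 : HasDerivAt (fun s : ℝ => f (x + t • v + s • v)) ⟪f' (x + t • v), v⟫ (t - t) := by
    rw [sub_self]; exact hdiff (x + t • v) v
  have h := h0.comp_sub_const t t
  refine h.congr_of_eventuallyEq (Filter.Eventually.of_forall fun s => ?_)
  simp only [add_assoc, ← add_smul, add_sub_cancel]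

theorem eq_add_half_of_hasDerivAt_mul {φ : ℝ → ℝ} {c : ℝ}
    (hφ : ∀ t ∈ Set.Icc (0 : ℝ) 1, HasDerivAt φ (t * c) t) : φ 1 = c / 2 + φ 0 := by
  have hq : ∀ t : ℝ, HasDerivAt (fun s : ℝ => s ^ 2 * (c / 2) + φ 0) (t * c) t := fun t =>
    (((hasDerivAt_pow 2 t).mul_const (c / 2)).add_const (φ 0)).congr_deriv (by push_cast; ring)
  have h := eq_of_has_deriv_right_eq (a := 0) (b := 1)
    (fun t ht => (hφ t (Set.Ico_subset_Icc_self ht)).hasDerivWithinAt)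
    (fun t _ => (hq t).hasDerivWithinAt)
    (fun t ht => (hφ t ht).continuousAt.continuousWithinAt)
    (fun t _ => (hq t).continuousAt.continuousWithinAt) (by simp) 1 (by simp)
  simpa using h

theorem stmt5_general (f : H → ℝ) (f' : H → H)
    (hdiff : ∀ x v : H, HasDerivAt (fun t : ℝ => f (x + t • v)) ⟪f' x, v⟫ 0)
    (hph : ∀ x : H, ∀ t : ℝ, 0 < t → f' (t • x) = t • f' x) (x : H) :
    f x = (1 / 2) * ⟪x, f' x⟫ + f 0 := by
  have hray : ∀ t ∈ Set.Icc (0 : ℝ) 1,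
      HasDerivAt (fun s : ℝ => f (s • x)) (t * ⟪f' x, x⟫) t := by
    intro t ht
    have h := hasDerivAt_comp_line hdiff 0 x t
    simp only [zero_add] at h
    rcases ht.1.eq_or_lt with rfl | ht0
    · simpa [map_zero_of_pos_homogeneous hph] using h
    · rwa [hph x t ht0, real_inner_smul_left] at h
  have h := eq_add_half_of_hasDerivAt_mul hray
  simp only [one_smul, zero_smul] at h
  rw [h, real_inner_comm]
  ring

theorem stmt5 (f : H → ℝ) (f' : H → H)
    (hdiff : ∀ x v : H, HasDerivAt (fun t : ℝ => f (x + t • v)) ⟪f' x, v⟫ 0)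
    (hmono : ∀ x y : H, 0 ≤ ⟪f' x - f' y, x - y⟫)
    (hph : ∀ x : H, ∀ t : ℝ, 0 < t → f' (t • x) = t • f' x) (x : H) :
    f x = (1 / 2) * ⟪x, f' x⟫ + f 0 :=
  stmt5_general f f' hdiff hph x
end

section
/- Let C and D be nonempty closed convex subsets of a real Hilbert space H. If there exists γ ∈ ℝ such that ⟨P_C x, P_D x⟩ = γ for all x ∈ H, then C + D is closed, P_C + P_D = P_{C+D}, and d²_{C+D}(x) = d²_C(x) + d²_D(x) − ‖x‖² + 2γ for all x ∈ H. -/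
open RealInnerProductSpace Pointwise

variable {H : Type*} [NormedAddCommGroup H] [InnerProductSpace ℝ H] [CompleteSpace H]

private lemma expand_sq_aux (x p q : H) :
    ‖x - (p + q)‖ ^ 2 = ‖x - p‖ ^ 2 + ‖x - q‖ ^ 2 - ‖x‖ ^ 2 + 2 * ⟪p, q⟫ := by
  have h : x - (p + q) = (x - p) - q := by abel
  have e1 : ‖(x - p) - q‖ ^ 2 = ‖x - p‖ ^ 2 - 2 * ⟪x - p, q⟫ + ‖q‖ ^ 2 := norm_sub_sq_real _ _
  have e2 : ‖x - q‖ ^ 2 = ‖x‖ ^ 2 - 2 * ⟪x, q⟫ + ‖q‖ ^ 2 := norm_sub_sq_real _ _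
  have e3 : ⟪x - p, q⟫ = ⟪x, q⟫ - ⟪p, q⟫ := inner_sub_left _ _ _
  rw [h, e1, e2, e3]; ring

private lemma vi_aux {C : Set H} {P : H → H} (hCcv : Convex ℝ C) (hP : IsProjOn C P)
    (x : H) {c : H} (hc : c ∈ C) : ⟪x - P x, c - P x⟫ ≤ 0 := by
  by_contra hcon
  push_neg at hcon
  have key : ∀ t : ℝ, 0 < t → t ≤ 1 →
      2 * t * ⟪x - P x, c - P x⟫ ≤ t ^ 2 * ‖c - P x‖ ^ 2 := by
    intro t ht0 ht1
    have hmem : P x + t • (c - P x) ∈ C := by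
      have := hCcv (hP x).1 hc (by linarith : (0:ℝ) ≤ 1 - t) ht0.le (by ring)
      convert this using 1
      module
    have hle := (hP x).2 _ hmem
    have hle2 : ‖x - P x‖ ^ 2 ≤ ‖x - (P x + t • (c - P x))‖ ^ 2 :=
      pow_le_pow_left₀ (norm_nonneg _) hle 2
    have hexp : x - (P x + t • (c - P x)) = (x - P x) - t • (c - P x) := by abel
    rw [hexp] at hle2
    have e0 : ‖(x - P x) - t • (c - P x)‖ ^ 2
        = ‖x - P x‖ ^ 2 - 2 * ⟪x - P x, t • (c - P x)⟫ + ‖t • (c - P x)‖ ^ 2 :=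
      norm_sub_sq_real _ _
    have e1 : ⟪x - P x, t • (c - P x)⟫ = t * ⟪x - P x, c - P x⟫ :=
      real_inner_smul_right _ _ _
    have e2 : ‖t • (c - P x)‖ ^ 2 = t ^ 2 * ‖c - P x‖ ^ 2 := by
      rw [norm_smul, Real.norm_eq_abs, mul_pow, sq_abs]
    rw [e0, e1, e2] at hle2
    linarith
  set ι := ⟪x - P x, c - P x⟫ with hι
  have h1 := key 1 one_pos le_rfl
  have hK : 0 < ‖c - P x‖ ^ 2 := by nlinarith
  set K := ‖c - P x‖ ^ 2 with hK'
  have ht0 : 0 < min 1 (ι / K) := lt_min one_pos (div_pos hcon hK)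
  have h2 := key _ ht0 (min_le_left _ _)
  have hmin : min 1 (ι / K) ≤ ι / K := min_le_right _ _
  have hsq : (min 1 (ι / K)) ^ 2 * K ≤ (min 1 (ι / K)) * ι := by
    have : (min 1 (ι / K)) * ((min 1 (ι / K)) * K) ≤ (min 1 (ι / K)) * ((ι / K) * K) := by
      apply mul_le_mul_of_nonneg_left _ ht0.le
      exact mul_le_mul_of_nonneg_right hmin hK.le
    rw [div_mul_cancel₀ _ hK.ne'] at this
    nlinarith
  nlinarith

private lemma nonexp_aux {C : Set H} {P : H → H} (hCcv : Convex ℝ C) (hP : IsProjOn C P)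
    (a b : H) : ‖P a - P b‖ ≤ ‖a - b‖ := by
  have h1 := vi_aux hCcv hP a (hP b).1
  have h2 := vi_aux hCcv hP b (hP a).1
  have e : ⟪a - b, P a - P b⟫ - ‖P a - P b‖ ^ 2
      = -⟪a - P a, P b - P a⟫ - ⟪b - P b, P a - P b⟫ := by
    rw [← real_inner_self_eq_norm_sq]
    simp only [inner_sub_left, inner_sub_right]
    ring
  have key : ‖P a - P b‖ ^ 2 ≤ ⟪a - b, P a - P b⟫ := by linarith
  have hcs : ⟪a - b, P a - P b⟫ ≤ ‖a - b‖ * ‖P a - P b‖ := real_inner_le_norm _ _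
  nlinarith [norm_nonneg (P a - P b), norm_nonneg (a - b)]

private lemma phi_sub_le_aux {C : Set H} {P : H → H} (hP : IsProjOn C P) (l l' : H) :
    (‖l'‖ ^ 2 - ‖l' - P l'‖ ^ 2) / 2 - (‖l‖ ^ 2 - ‖l - P l‖ ^ 2) / 2 ≤ ⟪l' - l, P l'⟫ := by
  have h : ‖l - P l‖ ≤ ‖l - P l'‖ := (hP l).2 (P l') (hP l').1
  have h2 : ‖l - P l‖ ^ 2 ≤ ‖l - P l'‖ ^ 2 := pow_le_pow_left₀ (norm_nonneg _) h 2
  have e1 : ‖l - P l‖ ^ 2 = ‖l‖ ^ 2 - 2 * ⟪l, P l⟫ + ‖P l‖ ^ 2 := norm_sub_sq_real _ _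
  have e2 : ‖l - P l'‖ ^ 2 = ‖l‖ ^ 2 - 2 * ⟪l, P l'⟫ + ‖P l'‖ ^ 2 := norm_sub_sq_real _ _
  have e3 : ‖l' - P l'‖ ^ 2 = ‖l'‖ ^ 2 - 2 * ⟪l', P l'⟫ + ‖P l'‖ ^ 2 := norm_sub_sq_real _ _
  have e4 : ⟪l' - l, P l'⟫ = ⟪l', P l'⟫ - ⟪l, P l'⟫ := inner_sub_left _ _ _
  rw [e3, e4]
  linarith

private lemma phi_lower_aux {C : Set H} {P : H → H} (hP : IsProjOn C P) (l : H) {c : H}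
    (hc : c ∈ C) : ⟪l, c⟫ - ‖c‖ ^ 2 / 2 ≤ (‖l‖ ^ 2 - ‖l - P l‖ ^ 2) / 2 := by
  have h2 : ‖l - P l‖ ^ 2 ≤ ‖l - c‖ ^ 2 :=
    pow_le_pow_left₀ (norm_nonneg _) ((hP l).2 c hc) 2
  have e : ‖l - c‖ ^ 2 = ‖l‖ ^ 2 - 2 * ⟪l, c⟫ + ‖c‖ ^ 2 := norm_sub_sq_real _ _
  linarith

private lemma approx_aux {C D : Set H} {Pc Pd : H → H}
    (hCcv : Convex ℝ C) (hDcv : Convex ℝ D)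
    (hPc : IsProjOn C Pc) (hPd : IsProjOn D Pd)
    {y z : H} (hy : y ∈ C) (hz : z ∈ D) :
    ∀ ε > 0, ∃ l : H, ‖(Pc l + Pd l) - (y + z)‖ < ε := by
  set w := y + z with hw
  set F : H → ℝ := fun l =>
    (‖l‖ ^ 2 - ‖l - Pc l‖ ^ 2) / 2 + (‖l‖ ^ 2 - ‖l - Pd l‖ ^ 2) / 2 - ⟪l, w⟫ with hF
  -- descent step
  have descent : ∀ l : H,
      F (l - (4⁻¹ : ℝ) • ((Pc l + Pd l) - w)) ≤ F l - ‖(Pc l + Pd l) - w‖ ^ 2 / 8 := by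
    intro l
    set r := (Pc l + Pd l) - w with hr
    set l' := l - (4⁻¹ : ℝ) • r with hl'
    have hdiff : l' - l = -((4⁻¹ : ℝ) • r) := by rw [hl']; abel
    have h1 := phi_sub_le_aux hPc l l'
    have h2 := phi_sub_le_aux hPd l l'
    have hFdiff : F l' - F l ≤ ⟪l' - l, (Pc l' + Pd l') - w⟫ := by
      have e : ⟪l' - l, (Pc l' + Pd l') - w⟫
          = ⟪l' - l, Pc l'⟫ + ⟪l' - l, Pd l'⟫ - ⟪l' - l, w⟫ := by
        rw [inner_sub_right, inner_add_right]
      have e2 : ⟪l' - l, w⟫ = ⟪l', w⟫ - ⟪l, w⟫ := inner_sub_left _ _ _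
      have e3 : F l' - F l
          = ((‖l'‖ ^ 2 - ‖l' - Pc l'‖ ^ 2) / 2 - (‖l‖ ^ 2 - ‖l - Pc l‖ ^ 2) / 2)
            + ((‖l'‖ ^ 2 - ‖l' - Pd l'‖ ^ 2) / 2 - (‖l‖ ^ 2 - ‖l - Pd l‖ ^ 2) / 2)
            - (⟪l', w⟫ - ⟪l, w⟫) := by
        simp only [hF]; ring
      rw [e3, e]
      linarith
    have hsplit : ⟪l' - l, (Pc l' + Pd l') - w⟫
        = -(4⁻¹ : ℝ) * ⟪r, (Pc l' + Pd l') - (Pc l + Pd l)⟫ - (4⁻¹ : ℝ) * ‖r‖ ^ 2 := by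
      have hdec : (Pc l' + Pd l') - w = ((Pc l' + Pd l') - (Pc l + Pd l)) + r := by
        rw [hr]; abel
      rw [hdiff, hdec, inner_neg_left, real_inner_smul_left, inner_add_right,
        real_inner_self_eq_norm_sq]
      ring
    have hll : ‖l' - l‖ = 4⁻¹ * ‖r‖ := by
      rw [hdiff, norm_neg, norm_smul]
      norm_num
    have hTT : ‖(Pc l' + Pd l') - (Pc l + Pd l)‖ ≤ 2⁻¹ * ‖r‖ := by
      have edec : (Pc l' + Pd l') - (Pc l + Pd l) = (Pc l' - Pc l) + (Pd l' - Pd l) := by abel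
      rw [edec]
      calc ‖(Pc l' - Pc l) + (Pd l' - Pd l)‖
          ≤ ‖Pc l' - Pc l‖ + ‖Pd l' - Pd l‖ := norm_add_le _ _
        _ ≤ ‖l' - l‖ + ‖l' - l‖ := by
            have := nonexp_aux hCcv hPc l' l
            have := nonexp_aux hDcv hPd l' l
            linarith
        _ = 2⁻¹ * ‖r‖ := by rw [hll]; ring
    have hinner : |⟪r, (Pc l' + Pd l') - (Pc l + Pd l)⟫| ≤ ‖r‖ * (2⁻¹ * ‖r‖) := by
      calc |⟪r, (Pc l' + Pd l') - (Pc l + Pd l)⟫|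
          ≤ ‖r‖ * ‖(Pc l' + Pd l') - (Pc l + Pd l)‖ := abs_real_inner_le_norm _ _
        _ ≤ ‖r‖ * (2⁻¹ * ‖r‖) := mul_le_mul_of_nonneg_left hTT (norm_nonneg _)
    have hinner2 : -(‖r‖ * (2⁻¹ * ‖r‖)) ≤ ⟪r, (Pc l' + Pd l') - (Pc l + Pd l)⟫ :=
      neg_le_of_abs_le hinner
    rw [hsplit] at hFdiff
    nlinarith [hFdiff, hinner2]
  -- lower bound for F
  have hlow : ∀ l : H, -(‖y‖ ^ 2 + ‖z‖ ^ 2) / 2 ≤ F l := by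
    intro l
    have h1 := phi_lower_aux hPc l hy
    have h2 := phi_lower_aux hPd l hz
    have e : ⟪l, w⟫ = ⟪l, y⟫ + ⟪l, z⟫ := by rw [hw, inner_add_right]
    simp only [hF]
    linarith
  -- by contradiction
  intro ε hε
  by_contra hcon
  push_neg at hcon
  set G : H → H := fun l => l - (4⁻¹ : ℝ) • ((Pc l + Pd l) - w) with hG
  have hseq : ∀ n : ℕ, F (G^[n] w) ≤ F w - n * (ε ^ 2 / 8) := by
    intro n
    induction n with
    | zero => simp
    | succ n ih =>
      have hstep := descent (G^[n] w)
      have hit : G^[n + 1] w = G (G^[n] w) := Function.iterate_succ_apply' _ _ _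
      have hεn : ε ^ 2 ≤ ‖(Pc (G^[n] w) + Pd (G^[n] w)) - w‖ ^ 2 :=
        pow_le_pow_left₀ hε.le (hcon _) 2
      rw [hit]
      push_cast
      calc F (G (G^[n] w)) ≤ F (G^[n] w) - ‖(Pc (G^[n] w) + Pd (G^[n] w)) - w‖ ^ 2 / 8 := hstep
        _ ≤ F w - n * (ε ^ 2 / 8) - ε ^ 2 / 8 := by linarith
        _ = F w - (n + 1) * (ε ^ 2 / 8) := by ring
  obtain ⟨n, hn⟩ := exists_nat_gt ((F w + (‖y‖ ^ 2 + ‖z‖ ^ 2) / 2) / (ε ^ 2 / 8))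
  have h1 := hseq n
  have h2 := hlow (G^[n] w)
  have hpos : 0 < ε ^ 2 / 8 := by positivity
  have : (F w + (‖y‖ ^ 2 + ‖z‖ ^ 2) / 2) < n * (ε ^ 2 / 8) := by
    rw [div_lt_iff₀ hpos] at hn
    linarith
  linarith

private lemma main_ineq_aux {C D : Set H} {Pc Pd : H → H}
    (hCcv : Convex ℝ C) (hDcv : Convex ℝ D)
    (hPc : IsProjOn C Pc) (hPd : IsProjOn D Pd)
    {γ : ℝ} (hγ : ∀ x : H, ⟪Pc x, Pd x⟫ = γ)
    (x : H) {w : H} (hw : w ∈ C + D) : ‖x - (Pc x + Pd x)‖ ≤ ‖x - w‖ := by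
  rw [Set.mem_add] at hw
  obtain ⟨y, hy, z, hz, rfl⟩ := hw
  refine le_of_forall_pos_le_add fun ε hε => ?_
  obtain ⟨l, hl⟩ := approx_aux hCcv hDcv hPc hPd hy hz ε hε
  have hsq : ‖x - (Pc x + Pd x)‖ ^ 2 ≤ ‖x - (Pc l + Pd l)‖ ^ 2 := by
    rw [expand_sq_aux x (Pc x) (Pd x), expand_sq_aux x (Pc l) (Pd l), hγ x, hγ l]
    have a1 : ‖x - Pc x‖ ^ 2 ≤ ‖x - Pc l‖ ^ 2 :=
      pow_le_pow_left₀ (norm_nonneg _) ((hPc x).2 _ (hPc l).1) 2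
    have a2 : ‖x - Pd x‖ ^ 2 ≤ ‖x - Pd l‖ ^ 2 :=
      pow_le_pow_left₀ (norm_nonneg _) ((hPd x).2 _ (hPd l).1) 2
    linarith
  have h2 : ‖x - (Pc x + Pd x)‖ ≤ ‖x - (Pc l + Pd l)‖ := by
    nlinarith [norm_nonneg (x - (Pc x + Pd x)), norm_nonneg (x - (Pc l + Pd l))]
  have h3 : ‖x - (Pc l + Pd l)‖ ≤ ‖x - (y + z)‖ + ‖(Pc l + Pd l) - (y + z)‖ := by
    have e : x - (Pc l + Pd l) = (x - (y + z)) - ((Pc l + Pd l) - (y + z)) := by abel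
    rw [e]
    exact norm_sub_le _ _
  linarith

theorem stmt7 (C D : Set H)
    (hCne : C.Nonempty) (hCcl : IsClosed C) (hCcv : Convex ℝ C)
    (hDne : D.Nonempty) (hDcl : IsClosed D) (hDcv : Convex ℝ D)
    (Pc Pd : H → H) (hPc : IsProjOn C Pc) (hPd : IsProjOn D Pd)
    (γ : ℝ) (hγ : ∀ x : H, ⟪Pc x, Pd x⟫ = γ) :
    IsClosed (C + D) ∧ IsProjOn (C + D) (fun x => Pc x + Pd x) ∧
      ∀ x : H, Metric.infDist x (C + D) ^ 2
        = Metric.infDist x C ^ 2 + Metric.infDist x D ^ 2 - ‖x‖ ^ 2 + 2 * γ := by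
  have main : ∀ x : H, ∀ w ∈ C + D, ‖x - (Pc x + Pd x)‖ ≤ ‖x - w‖ := fun x w hw =>
    main_ineq_aux hCcv hDcv hPc hPd hγ x hw
  have memT : ∀ x : H, Pc x + Pd x ∈ C + D := fun x =>
    Set.add_mem_add (hPc x).1 (hPd x).1
  have hproj : IsProjOn (C + D) (fun x => Pc x + Pd x) := fun x =>
    ⟨memT x, fun w hw => main x w hw⟩
  refine ⟨?_, hproj, ?_⟩
  · refine isClosed_of_closure_subset fun u hu => ?_
    have hzero : ‖u - (Pc u + Pd u)‖ ≤ 0 := by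
      refine le_of_forall_pos_le_add fun ε hε => ?_
      obtain ⟨v, hv, hdist⟩ := Metric.mem_closure_iff.mp hu ε hε
      have := main u v hv
      rw [dist_eq_norm] at hdist
      linarith
    have : u = Pc u + Pd u := by
      have := le_antisymm hzero (norm_nonneg _)
      rw [norm_eq_zero, sub_eq_zero] at this
      exact this
    rw [this]
    exact memT u
  · intro x
    have hCD : Metric.infDist x (C + D) = ‖x - (Pc x + Pd x)‖ := by
      refine le_antisymm ?_ ?_
      · have := Metric.infDist_le_dist_of_mem (x := x) (memT x)
        rwa [dist_eq_norm] at this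
      · refine le_of_not_gt fun hlt => ?_
        obtain ⟨v, hv, hd⟩ := (Metric.infDist_lt_iff (hCne.add hDne)).mp hlt
        have hle := main x v hv
        rw [dist_eq_norm] at hd
        linarith
    have hC : Metric.infDist x C = ‖x - Pc x‖ := by
      refine le_antisymm ?_ ?_
      · have := Metric.infDist_le_dist_of_mem (x := x) (hPc x).1
        rwa [dist_eq_norm] at this
      · refine le_of_not_gt fun hlt => ?_
        obtain ⟨v, hv, hd⟩ := (Metric.infDist_lt_iff hCne).mp hlt
        have hle := (hPc x).2 v hv
        rw [dist_eq_norm] at hd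
        linarith
    have hD : Metric.infDist x D = ‖x - Pd x‖ := by
      refine le_antisymm ?_ ?_
      · have := Metric.infDist_le_dist_of_mem (x := x) (hPd x).1
        rwa [dist_eq_norm] at this
      · refine le_of_not_gt fun hlt => ?_
        obtain ⟨v, hv, hd⟩ := (Metric.infDist_lt_iff hDne).mp hlt
        have hle := (hPd x).2 v hv
        rw [dist_eq_norm] at hd
        linarith
    rw [hCD, hC, hD, expand_sq_aux x (Pc x) (Pd x), hγ x]
end

section
/- Let C and D be nonempty closed convex subsets of a real Hilbert space H such that ⟨c, d⟩ = 0 for all c ∈ C and d ∈ D (i.e., C ⊥ D). Then C + D is closed and convex, P_C + P_D = P_{C+D}, and d²_{C+D} = d²_C + d²_D − ‖·‖². -/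
/-!
For `c ⊥ d`, expanding the squares gives
`‖x - (c + d)‖² = ‖x - c‖² + ‖x - d‖² - ‖x‖²`, so minimizing the left side over `C + D`
splits into minimizing `‖x - c‖` over `C` and `‖x - d‖` over `D` independently:
`P_C x + P_D x` is a nearest point of `C + D`, which gives the distance formula.
Closedness of `C + D` needs no separate argument, since a set in which every point
has a nearest point is closed.
-/

open RealInnerProductSpace Pointwise

variable {H : Type*} [NormedAddCommGroup H] [InnerProductSpace ℝ H] [CompleteSpace H]

section

variable {E : Type*} [NormedAddCommGroup E]

theorem IsProjOn.infDist_eq {C : Set E} {P : E → E} (hP : IsProjOn C P) (x : E) :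
    Metric.infDist x C = ‖x - P x‖ := by
  obtain ⟨hPx, hmin⟩ := hP x
  refine le_antisymm (by simpa [dist_eq_norm] using Metric.infDist_le_dist_of_mem hPx) ?_
  exact (Metric.le_infDist ⟨_, hPx⟩).2 fun y hy => by simpa [dist_eq_norm] using hmin y hy

theorem IsProjOn.isClosed {C : Set E} {P : E → E} (hP : IsProjOn C P) : IsClosed C := by
  refine closure_subset_iff_isClosed.1 fun x hx => ?_
  have hdist : ‖x - P x‖ = 0 := by
    rw [← hP.infDist_eq, Metric.infDist_zero_of_mem_closure hx]
  rw [norm_eq_zero, sub_eq_zero] at hdist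
  exact hdist ▸ (hP x).1

variable [InnerProductSpace ℝ E]

theorem norm_sub_add_sq_of_inner_eq_zero (x : E) {c d : E} (h : ⟪c, d⟫ = 0) :
    ‖x - (c + d)‖ ^ 2 = ‖x - c‖ ^ 2 + ‖x - d‖ ^ 2 - ‖x‖ ^ 2 := by
  have h' : ⟪d, c⟫ = 0 := by rwa [real_inner_comm]
  simp only [← real_inner_self_eq_norm_sq, inner_sub_left, inner_sub_right,
    inner_add_left, inner_add_right, h, h']
  ring

theorem IsProjOn.add {C D : Set E} {Pc Pd : E → E} (hPc : IsProjOn C Pc)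
    (hPd : IsProjOn D Pd) (hperp : ∀ c ∈ C, ∀ d ∈ D, ⟪c, d⟫ = 0) :
    IsProjOn (C + D) (fun x => Pc x + Pd x) := by
  intro x
  obtain ⟨hPcx, hPcmin⟩ := hPc x
  obtain ⟨hPdx, hPdmin⟩ := hPd x
  refine ⟨Set.add_mem_add hPcx hPdx, ?_⟩
  rintro _ ⟨c, hc, d, hd, rfl⟩
  have hsq : ‖x - (Pc x + Pd x)‖ ^ 2 ≤ ‖x - (c + d)‖ ^ 2 := by
    rw [norm_sub_add_sq_of_inner_eq_zero x (hperp _ hPcx _ hPdx),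
      norm_sub_add_sq_of_inner_eq_zero x (hperp _ hc _ hd)]
    gcongr
    exacts [hPcmin c hc, hPdmin d hd]
  exact pow_le_pow_iff_left₀ (norm_nonneg _) (norm_nonneg _) two_ne_zero |>.1 hsq

end

theorem stmt8_general (C D : Set H)
    (hCcv : Convex ℝ C)
    (hDcv : Convex ℝ D)
    (hperp : ∀ c ∈ C, ∀ d ∈ D, ⟪c, d⟫ = 0)
    (Pc Pd : H → H) (hPc : IsProjOn C Pc) (hPd : IsProjOn D Pd) :
    IsClosed (C + D) ∧ Convex ℝ (C + D) ∧ IsProjOn (C + D) (fun x => Pc x + Pd x) ∧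
      ∀ x : H, Metric.infDist x (C + D) ^ 2
        = Metric.infDist x C ^ 2 + Metric.infDist x D ^ 2 - ‖x‖ ^ 2 := by
  have hproj := hPc.add hPd hperp
  refine ⟨hproj.isClosed, hCcv.add hDcv, hproj, fun x => ?_⟩
  rw [hproj.infDist_eq, hPc.infDist_eq, hPd.infDist_eq]
  exact norm_sub_add_sq_of_inner_eq_zero x (hperp _ (hPc x).1 _ (hPd x).1)

theorem stmt8 (C D : Set H)
    (hCne : C.Nonempty) (hCcl : IsClosed C) (hCcv : Convex ℝ C)
    (hDne : D.Nonempty) (hDcl : IsClosed D) (hDcv : Convex ℝ D)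
    (hperp : ∀ c ∈ C, ∀ d ∈ D, ⟪c, d⟫ = 0)
    (Pc Pd : H → H) (hPc : IsProjOn C Pc) (hPd : IsProjOn D Pd) :
    IsClosed (C + D) ∧ Convex ℝ (C + D) ∧ IsProjOn (C + D) (fun x => Pc x + Pd x) ∧
      ∀ x : H, Metric.infDist x (C + D) ^ 2
        = Metric.infDist x C ^ 2 + Metric.infDist x D ^ 2 - ‖x‖ ^ 2 :=
  stmt8_general C D hCcv hDcv hperp Pc Pd hPc hPd
end

section
/- Let K be a nonempty closed convex cone in a real Hilbert space H with polar cone K⊖, let ρ₁, ρ₂ > 0, set C = K ∩ B(0, ρ₁) and D = K⊖ ∩ B(0, ρ₂). Then ⟨P_C x, P_D x⟩ = 0 for every x ∈ H. -/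
open RealInnerProductSpace Pointwise

variable {H : Type*} [NormedAddCommGroup H] [InnerProductSpace ℝ H] [CompleteSpace H]

/-- The polar cone of a set. -/
def polarCone (C : Set H) : Set H := {u | ∀ c ∈ C, ⟪c, u⟫ ≤ 0}

/-!
Let `p = P_K x`. Then `x - p ∈ K⊖`, `⟪x - p, p⟫ = 0`, and `x - p = P_{K⊖} x` (Moreau). Projecting
onto a cone truncated by a ball only rescales the projection onto the cone:
`P_{K ∩ B(0,ρ)} x = (ρ / max ‖p‖ ρ) • p`. Hence `P_C x` and `P_D x` are nonnegative multiples of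
the orthogonal vectors `p` and `x - p`.
-/

section

variable {E : Type*} [NormedAddCommGroup E] [InnerProductSpace ℝ E]

namespace IsProjOn

variable {C : Set E} {P : E → E}

lemma eq_of_inner_le_zero (hC : Convex ℝ C) (hP : IsProjOn C P) {x c : E} (hc : c ∈ C)
    (hcx : ∀ y ∈ C, ⟪x - c, y - c⟫ ≤ 0) : P x = c := by
  have : Nonempty C := ⟨⟨P x, (hP x).1⟩⟩
  have hbdd : BddBelow (Set.range fun w : C => ‖x - w‖) := ⟨0, by
    rintro _ ⟨w, rfl⟩
    positivity⟩
  have hinf : ‖x - P x‖ = ⨅ w : C, ‖x - w‖ :=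
    le_antisymm (le_ciInf fun w => (hP x).2 w w.2) (ciInf_le hbdd ⟨P x, (hP x).1⟩)
  have hPx := (norm_eq_iInf_iff_real_inner_le_zero hC (hP x).1).mp hinf c hc
  have hc' := hcx (P x) (hP x).1
  have hsq : ⟪P x - c, P x - c⟫ = ⟪x - c, P x - c⟫ + ⟪x - P x, c - P x⟫ := by
    simp only [inner_sub_left, inner_sub_right]
    ring
  exact sub_eq_zero.mp (real_inner_self_nonpos.mp (by linarith))

end IsProjOn

/-- For a convex cone `K`, this characterises `p` as the projection of `x` onto `K`. -/
def IsConeProj (K : Set E) (x p : E) : Prop :=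
  p ∈ K ∧ ⟪x - p, p⟫ = 0 ∧ ∀ y ∈ K, ⟪x - p, y⟫ ≤ 0

variable {K : Set E}

lemma isConeProj_of_inner_le_zero (hcone : ∀ c ∈ K, ∀ t : ℝ, 0 ≤ t → t • c ∈ K) {x p : E}
    (hp : p ∈ K) (hpx : ∀ y ∈ K, ⟪x - p, y - p⟫ ≤ 0) : IsConeProj K x p := by
  have h0 := hpx _ (hcone p hp 0 le_rfl)
  have h2 := hpx _ (hcone p hp 2 zero_le_two)
  rw [zero_smul, zero_sub, inner_neg_right] at h0
  rw [two_smul, add_sub_cancel_right] at h2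
  have horth : ⟪x - p, p⟫ = 0 := by linarith
  refine ⟨hp, horth, fun y hy => ?_⟩
  have := hpx y hy
  rwa [inner_sub_right, horth, sub_zero] at this

lemma IsConeProj.polarCone {x p : E} (h : IsConeProj K x p) :
    IsConeProj (polarCone K) x (x - p) := by
  obtain ⟨hp, horth, hpol⟩ := h
  rw [IsConeProj, sub_sub_cancel, real_inner_comm]
  exact ⟨fun c hc => real_inner_comm (x - p) c ▸ hpol c hc, horth, fun z hz => hz p hp⟩

lemma convex_polarCone (K : Set E) : Convex ℝ (polarCone K) := by
  intro u hu v hv a b ha hb _ c hc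
  rw [inner_add_right, real_inner_smul_right, real_inner_smul_right]
  nlinarith [hu c hc, hv c hc]

lemma smul_mem_polarCone {u : E} (hu : u ∈ polarCone K) {t : ℝ} (ht : 0 ≤ t) :
    t • u ∈ polarCone K := fun c hc => by
  rw [real_inner_smul_right]
  exact mul_nonpos_of_nonneg_of_nonpos ht (hu c hc)

lemma inner_sub_smul_sub_smul {x p : E} (horth : ⟪x - p, p⟫ = 0) (y : E) (t : ℝ) :
    ⟪x - t • p, y - t • p⟫ = ⟪x - p, y⟫ + (1 - t) * (⟪p, y⟫ - t * ‖p‖ ^ 2) := by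
  rw [inner_sub_left, real_inner_self_eq_norm_sq] at horth
  simp only [inner_sub_left, inner_sub_right, real_inner_smul_left, real_inner_smul_right]
  linear_combination (-t) * horth + t ^ 2 * real_inner_self_eq_norm_sq p

lemma IsProjOn.eq_smul_of_isConeProj (hcv : Convex ℝ K)
    (hcone : ∀ c ∈ K, ∀ t : ℝ, 0 ≤ t → t • c ∈ K) {ρ : ℝ} {P : E → E}
    (hP : IsProjOn (K ∩ Metric.closedBall 0 ρ) P) {x p : E} (hp : IsConeProj K x p) :
    P x = (ρ / max ‖p‖ ρ) • p := by
  obtain ⟨hpS, horth, hpol⟩ := hp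
  have hρ : 0 ≤ ρ := dist_nonneg.trans (hP x).1.2
  set t := ρ / max ‖p‖ ρ with ht
  have hm : 0 ≤ max ‖p‖ ρ := le_max_of_le_right hρ
  have ht0 : 0 ≤ t := div_nonneg hρ hm
  have ht1 : t ≤ 1 := div_le_one_of_le₀ (le_max_right _ _) hm
  have htp : t * ‖p‖ ≤ ρ := by
    rcases hm.eq_or_lt with hm0 | hm0
    · simp [ht, ← hm0, hρ]
    · rw [div_mul_eq_mul_div, div_le_iff₀ hm0]
      exact mul_le_mul_of_nonneg_left (le_max_left _ _) hρ
  -- `max ‖p‖ ρ` is `‖p‖` or `ρ`, so `t * ‖p‖ = ρ` or `t = 1`, unless `p = 0`.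
  have hslack : (1 - t) * (ρ - t * ‖p‖) * ‖p‖ = 0 := by
    rcases (norm_nonneg p).eq_or_lt with hp0 | hp0
    · rw [← hp0, mul_zero]
    rcases le_total ‖p‖ ρ with h | h
    · rw [ht, max_eq_right h, div_self (hp0.trans_le h).ne', sub_self, zero_mul, zero_mul]
    · rw [ht, max_eq_left h, div_mul_cancel₀ _ hp0.ne', sub_self, mul_zero, zero_mul]
  refine hP.eq_of_inner_le_zero (hcv.inter (convex_closedBall _ _)) ⟨hcone p hpS t ht0, ?_⟩ ?_
  · rwa [mem_closedBall_zero_iff, norm_smul, Real.norm_of_nonneg ht0]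
  rintro y ⟨hyK, hyρ⟩
  rw [mem_closedBall_zero_iff] at hyρ
  have hpy : ⟪p, y⟫ ≤ ‖p‖ * ρ :=
    (real_inner_le_norm p y).trans (mul_le_mul_of_nonneg_left hyρ (norm_nonneg p))
  rw [inner_sub_smul_sub_smul horth]
  nlinarith [hpol y hyK]

end

lemma exists_isConeProj {K : Set H} (hne : K.Nonempty) (hcl : IsClosed K) (hcv : Convex ℝ K)
    (hcone : ∀ c ∈ K, ∀ t : ℝ, 0 ≤ t → t • c ∈ K) (x : H) : ∃ p, IsConeProj K x p := by
  obtain ⟨p, hp, hpx⟩ := exists_norm_eq_iInf_of_complete_convex hne hcl.isComplete hcv x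
  exact ⟨p, isConeProj_of_inner_le_zero hcone hp
    ((norm_eq_iInf_iff_real_inner_le_zero hcv hp).mp hpx)⟩

theorem stmt9_general (K : Set H)
    (hcl : IsClosed K) (hcv : Convex ℝ K)
    (hcone : ∀ c ∈ K, ∀ t : ℝ, 0 ≤ t → t • c ∈ K)
    (ρ₁ ρ₂ : ℝ)
    (Pc Pd : H → H)
    (hPc : IsProjOn (K ∩ Metric.closedBall 0 ρ₁) Pc)
    (hPd : IsProjOn (polarCone K ∩ Metric.closedBall 0 ρ₂) Pd)
    (x : H) :
    ⟪Pc x, Pd x⟫ = 0 := by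
  obtain ⟨p, hp⟩ := exists_isConeProj ⟨_, (hPc x).1.1⟩ hcl hcv hcone x
  rw [hPc.eq_smul_of_isConeProj hcv hcone hp,
    hPd.eq_smul_of_isConeProj (convex_polarCone K) (fun _ hu _ ht => smul_mem_polarCone hu ht)
      hp.polarCone,
    real_inner_smul_left, real_inner_smul_right, real_inner_comm, hp.2.1, mul_zero, mul_zero]

theorem stmt9 (K : Set H)
    (hne : K.Nonempty) (hcl : IsClosed K) (hcv : Convex ℝ K)
    (hcone : ∀ c ∈ K, ∀ t : ℝ, 0 ≤ t → t • c ∈ K)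
    (ρ₁ ρ₂ : ℝ) (hρ₁ : 0 < ρ₁) (hρ₂ : 0 < ρ₂)
    (Pc Pd : H → H)
    (hPc : IsProjOn (K ∩ Metric.closedBall 0 ρ₁) Pc)
    (hPd : IsProjOn (polarCone K ∩ Metric.closedBall 0 ρ₂) Pd)
    (x : H) :
    ⟪Pc x, Pd x⟫ = 0 :=
  stmt9_general K hcl hcv hcone ρ₁ ρ₂ Pc Pd hPc hPd x
end

section
/- Let C be a nonempty closed convex subset of a real Hilbert space H and let u ∈ H. Then the map x ↦ u + P_C x is a projector onto a closed convex set if and only if u ∈ (C − C)^⊥; in that case u + P_C = P_{u+C}. -/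
open RealInnerProductSpace Pointwise

variable {H : Type*} [NormedAddCommGroup H] [InnerProductSpace ℝ H] [CompleteSpace H]

lemma aux_part2 (C : Set H) (Pc : H → H) (hPc : IsProjOn C Pc) (u : H)
    (hu : ∀ c ∈ C, ∀ c' ∈ C, ⟪u, c - c'⟫ = 0) :
    IsProjOn ((fun c => u + c) '' C) (fun x => u + Pc x) := by
  intro x
  obtain ⟨hmem, hmin⟩ := hPc x
  refine ⟨⟨Pc x, hmem, rfl⟩, ?_⟩
  rintro y ⟨c, hc, rfl⟩
  have h := hmin c hc
  have horth : ⟪u, Pc x - c⟫ = 0 := hu _ hmem _ hc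
  have e1 : x - (u + Pc x) = (x - Pc x) - u := by abel
  have e2 : x - (u + c) = (x - c) - u := by abel
  rw [e1, e2]
  have h1 : ‖(x - Pc x) - u‖ ^ 2 = ‖x - Pc x‖ ^ 2 - 2 * ⟪x - Pc x, u⟫ + ‖u‖ ^ 2 := by
    rw [norm_sub_sq_real]
  have h2 : ‖(x - c) - u‖ ^ 2 = ‖x - c‖ ^ 2 - 2 * ⟪x - c, u⟫ + ‖u‖ ^ 2 := by
    rw [norm_sub_sq_real]
  have h3 : ⟪x - Pc x, u⟫ - ⟪x - c, u⟫ = -⟪u, Pc x - c⟫ := by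
    rw [← inner_sub_left, real_inner_comm,
      show (x - Pc x) - (x - c) = -(Pc x - c) by abel, inner_neg_right]
  have hsq : ‖(x - Pc x) - u‖ ^ 2 ≤ ‖(x - c) - u‖ ^ 2 := by
    rw [h1, h2]
    have h4 : ‖x - Pc x‖ ^ 2 ≤ ‖x - c‖ ^ 2 := by
      nlinarith [norm_nonneg (x - Pc x), norm_nonneg (x - c)]
    nlinarith [horth, h3]
  nlinarith [hsq, norm_nonneg ((x - Pc x) - u), norm_nonneg ((x - c) - u)]

theorem stmt10 (C : Set H)
    (hne : C.Nonempty) (hcl : IsClosed C) (hcv : Convex ℝ C)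
    (Pc : H → H) (hPc : IsProjOn C Pc) (u : H) :
    ((∃ D : Set H, D.Nonempty ∧ IsClosed D ∧ Convex ℝ D ∧
        IsProjOn D (fun x => u + Pc x))
      ↔ ∀ c ∈ C, ∀ c' ∈ C, ⟪u, c - c'⟫ = 0)
    ∧ ((∀ c ∈ C, ∀ c' ∈ C, ⟪u, c - c'⟫ = 0) →
        IsProjOn ((fun c => u + c) '' C) (fun x => u + Pc x)) := by
  have hfix : ∀ z ∈ C, Pc z = z := by
    intro z hz
    have h := (hPc z).2 z hz
    rw [sub_self, norm_zero] at h
    exact (sub_eq_zero.mp (norm_le_zero_iff.mp h)).symm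
  refine ⟨⟨?_, ?_⟩, fun hu => aux_part2 C Pc hPc u hu⟩
  · rintro ⟨D, hDne, hDcl, hDcv, hD⟩ c hc c' hc'
    have hmemD : ∀ a ∈ C, u + a ∈ D := by
      intro a ha
      have := (hD a).1
      simpa [hfix a ha] using this
    have key : ∀ a ∈ C, ∀ b ∈ C, 0 ≤ ⟪u, b - a⟫ := by
      intro a ha b hb
      by_contra hneg
      push_neg at hneg
      set s := ⟪u, b - a⟫ with hs
      set q := ‖b - a‖ ^ 2 with hq
      have hab : b ≠ a := by
        intro h; rw [h, sub_self, inner_zero_right] at hs; exact absurd hs.symm (by linarith)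
      have hqpos : 0 < q := by
        exact pow_pos (norm_pos_iff.mpr (sub_ne_zero.mpr hab)) 2
      set t : ℝ := min 1 (-s / q) with ht
      have htpos : 0 < t := lt_min one_pos (div_pos (by linarith) hqpos)
      have ht1 : t ≤ 1 := min_le_left _ _
      have htq : t * q ≤ -s := by
        have : t ≤ -s / q := min_le_right _ _
        calc t * q ≤ (-s / q) * q := by nlinarith
          _ = -s := div_mul_cancel₀ (-s) hqpos.ne'
      -- the point a + t • (b - a) belongs to C
      have hmemC : a + t • (b - a) ∈ C := by
        have := hcv ha hb (a := 1 - t) (b := t) (by linarith) (by linarith) (by ring)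
        have e : (1 - t) • a + t • b = a + t • (b - a) := by
          rw [smul_sub, sub_smul, one_smul]; abel
        rwa [e] at this
      have hy : u + (a + t • (b - a)) ∈ D := hmemD _ hmemC
      have hineq := (hD a).2 _ hy
      simp only [hfix a ha] at hineq
      have e1 : a - (u + a) = -u := by abel
      have e2 : a - (u + (a + t • (b - a))) = -(u + t • (b - a)) := by abel
      rw [e1, e2, norm_neg, norm_neg] at hineq
      have hsq : ‖u‖ ^ 2 ≤ ‖u + t • (b - a)‖ ^ 2 := by
        nlinarith [norm_nonneg u, norm_nonneg (u + t • (b - a))]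
      have hexp : ‖u + t • (b - a)‖ ^ 2 = ‖u‖ ^ 2 + 2 * t * s + t ^ 2 * q := by
        rw [norm_add_sq_real, real_inner_smul_right, norm_smul, hs, hq]
        simp [mul_pow, abs_of_pos htpos]
        ring
      rw [hexp] at hsq
      have h5 : 0 ≤ 2 * s + t * q := by nlinarith
      nlinarith
    have h1 := key c' hc' c hc
    have h2 := key c hc c' hc'
    have : ⟪u, c' - c⟫ = -⟪u, c - c'⟫ := by
      rw [← inner_neg_right]; congr 1; abel
    linarith [this ▸ h2, h1]
  · intro hu
    refine ⟨(fun c => u + c) '' C, hne.image _, ?_, hcv.translate u, aux_part2 C Pc hPc u hu⟩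
    exact (Homeomorph.addLeft u).isClosedMap C hcl
end

section
/- Let (C_i)_{i∈I} be a finite family of nonempty closed convex subsets of a real Hilbert space H with nonempty intersection ∩_{i∈I} C_i ≠ ∅. Suppose there exist weights α_i ∈ (0,1] with Σ α_i = 1 such that Σ_{i∈I} α_i P_{C_i} is a projector onto a closed convex set. Then C_i = C_j for all i, j ∈ I. -/
/-!
Let `T = ∑ i, a i • P i` and `z ∈ ⋂ i, C i`. If `T x = x`, the variational inequalities at `z`
give `∑ i, a i * ‖x - P i x‖ ^ 2 ≤ ⟪x - T x, x - z⟫ = 0`, so every `P i x = x`: thus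
`D ⊆ ⋂ i, C i`. Conversely, for `x ∈ C i` the point `T x` lies in `D ⊆ C j`, so
`‖x - P j x‖ ≤ ‖x - T x‖` for all `j`, while `P i x = x`. Then
`‖x - T x‖ ≤ ∑ j, a j * ‖x - P j x‖ ≤ (1 - a i) * ‖x - T x‖`, which forces `x = T x ∈ D`.
-/

open RealInnerProductSpace Pointwise

variable {H : Type*} [NormedAddCommGroup H] [InnerProductSpace ℝ H] [CompleteSpace H]

open Finset

theorem sub_sum_smul_of_sum_eq_one {ι R E : Type*} [Ring R] [AddCommGroup E] [Module R E]
    {s : Finset ι} {a : ι → R} (ha : ∑ i ∈ s, a i = 1) (x : E) (y : ι → E) :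
    x - ∑ i ∈ s, a i • y i = ∑ i ∈ s, a i • (x - y i) := by
  simp only [smul_sub, sum_sub_distrib, ← sum_smul, ha, one_smul]

theorem norm_sum_smul_le_of_nonneg {ι E : Type*} [SeminormedAddCommGroup E] [NormedSpace ℝ E]
    {s : Finset ι} {a : ι → ℝ} (ha : ∀ i ∈ s, 0 ≤ a i) (v : ι → E) :
    ‖∑ i ∈ s, a i • v i‖ ≤ ∑ i ∈ s, a i * ‖v i‖ :=
  (norm_sum_le _ _).trans_eq <| sum_congr rfl fun i hi => by
    rw [norm_smul, Real.norm_of_nonneg (ha i hi)]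

namespace IsProjOn

section Normed

variable {E : Type*} [NormedAddCommGroup E] {C : Set E} {P : E → E}

theorem apply_eq_self_iff (hP : IsProjOn C P) {x : E} : P x = x ↔ x ∈ C := by
  refine ⟨fun h => h ▸ (hP x).1, fun hx => ?_⟩
  have := (hP x).2 x hx
  rwa [sub_self, norm_zero, norm_le_zero_iff, sub_eq_zero, eq_comm] at this

end Normed

section InnerProduct

variable {E : Type*} [NormedAddCommGroup E] [InnerProductSpace ℝ E] {C : Set E} {P : E → E}

theorem inner_sub_apply_le_zero (hP : IsProjOn C P) (hC : Convex ℝ C) (x : E) :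
    ∀ w ∈ C, ⟪x - P x, w - P x⟫ ≤ 0 := by
  have hmem := (hP x).1
  have : Nonempty C := ⟨⟨P x, hmem⟩⟩
  rw [← norm_eq_iInf_iff_real_inner_le_zero hC hmem]
  exact le_antisymm (le_ciInf fun w => (hP x).2 w w.2)
    (ciInf_le ⟨0, Set.forall_mem_range.2 fun _ => norm_nonneg _⟩ (⟨P x, hmem⟩ : C))

theorem norm_sub_apply_sq_le_inner (hP : IsProjOn C P) (hC : Convex ℝ C) (x : E) {z : E}
    (hz : z ∈ C) : ‖x - P x‖ ^ 2 ≤ ⟪x - P x, x - z⟫ := by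
  have h := hP.inner_sub_apply_le_zero hC x z hz
  rw [show z - P x = (x - P x) - (x - z) by abel, inner_sub_right,
    real_inner_self_eq_norm_sq] at h
  linarith

end InnerProduct

end IsProjOn

section Average

variable {ι E : Type*} {I : Finset ι} {C : ι → Set E} {P : ι → E → E} {a : ι → ℝ}

theorem apply_eq_self_of_sum_smul_apply_eq_self [NormedAddCommGroup E] [InnerProductSpace ℝ E]
    (hP : ∀ i ∈ I, IsProjOn (C i) (P i)) (hC : ∀ i ∈ I, Convex ℝ (C i))
    (ha : ∀ i ∈ I, 0 < a i) (hsum : ∑ i ∈ I, a i = 1) {z : E} (hz : ∀ i ∈ I, z ∈ C i)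
    {x : E} (hx : ∑ i ∈ I, a i • P i x = x) : ∀ i ∈ I, P i x = x := by
  have hnonneg : ∀ i ∈ I, 0 ≤ a i * ‖x - P i x‖ ^ 2 := fun i hi =>
    mul_nonneg (ha i hi).le (sq_nonneg _)
  have hle : ∑ i ∈ I, a i * ‖x - P i x‖ ^ 2 ≤ 0 :=
    calc ∑ i ∈ I, a i * ‖x - P i x‖ ^ 2
        ≤ ∑ i ∈ I, a i * ⟪x - P i x, x - z⟫ := sum_le_sum fun i hi =>
          mul_le_mul_of_nonneg_left ((hP i hi).norm_sub_apply_sq_le_inner (hC i hi) x (hz i hi))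
            (ha i hi).le
      _ = ⟪x - ∑ i ∈ I, a i • P i x, x - z⟫ := by
          simp only [sub_sum_smul_of_sum_eq_one hsum, sum_inner, real_inner_smul_left]
      _ = 0 := by rw [hx, sub_self, inner_zero_left]
  have hzero := (sum_eq_zero_iff_of_nonneg hnonneg).1 (le_antisymm hle (sum_nonneg hnonneg))
  intro i hi
  have := hzero i hi
  rwa [mul_eq_zero, or_iff_right (ha i hi).ne', sq_eq_zero_iff, norm_eq_zero, sub_eq_zero,
    eq_comm] at this

theorem sum_smul_apply_eq_self_of_mem [NormedAddCommGroup E] [NormedSpace ℝ E]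
    (hP : ∀ i ∈ I, IsProjOn (C i) (P i)) (ha : ∀ i ∈ I, 0 < a i) (hsum : ∑ i ∈ I, a i = 1)
    {i : ι} (hi : i ∈ I) {x : E} (hx : x ∈ C i)
    (hTx : ∀ j ∈ I, ∑ k ∈ I, a k • P k x ∈ C j) : ∑ k ∈ I, a k • P k x = x := by
  classical
  set d := ‖x - ∑ k ∈ I, a k • P k x‖ with hd_def
  have hPi : ‖x - P i x‖ = 0 := by rw [(hP i hi).apply_eq_self_iff.2 hx, sub_self, norm_zero]
  have hd : d ≤ (1 - a i) * d :=
    calc d ≤ ∑ j ∈ I, a j * ‖x - P j x‖ := by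
          rw [hd_def, sub_sum_smul_of_sum_eq_one hsum]
          exact norm_sum_smul_le_of_nonneg (fun j hj => (ha j hj).le) _
      _ = ∑ j ∈ I.erase i, a j * ‖x - P j x‖ := by
          rw [sum_erase _ (by rw [hPi, mul_zero])]
      _ ≤ ∑ j ∈ I.erase i, a j * d := sum_le_sum fun j hj =>
          have hj := mem_of_mem_erase hj
          mul_le_mul_of_nonneg_left ((hP j hj x).2 _ (hTx j hj)) (ha j hj).le
      _ = (1 - a i) * d := by rw [← sum_mul, sum_erase_eq_sub hi, hsum]
  have : d = 0 := le_antisymm (by nlinarith [ha i hi]) (norm_nonneg _)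
  rwa [norm_eq_zero, sub_eq_zero, eq_comm] at this

end Average

theorem stmt11_general {ι : Type*} (I : Finset ι) (C : ι → Set H)
    (hcv : ∀ i ∈ I, Convex ℝ (C i))
    (hint : (⋂ i ∈ I, C i).Nonempty)
    (P : ι → H → H) (hP : ∀ i ∈ I, IsProjOn (C i) (P i))
    (a : ι → ℝ) (ha : ∀ i ∈ I, 0 < a i ∧ a i ≤ 1) (hsum : ∑ i ∈ I, a i = 1)
    (D : Set H)
    (hproj : IsProjOn D (fun x => ∑ i ∈ I, a i • P i x)) :
    ∀ i ∈ I, ∀ j ∈ I, C i = C j := by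
  obtain ⟨z, hz⟩ := hint
  rw [Set.mem_iInter₂] at hz
  have ha₀ : ∀ i ∈ I, 0 < a i := fun i hi => (ha i hi).1
  have hDC : ∀ j ∈ I, D ⊆ C j := fun j hj x hx =>
    (hP j hj).apply_eq_self_iff.1 <| apply_eq_self_of_sum_smul_apply_eq_self hP hcv ha₀ hsum hz
      (hproj.apply_eq_self_iff.2 hx) j hj
  have hCD : ∀ i ∈ I, C i ⊆ D := fun i hi x hx =>
    sum_smul_apply_eq_self_of_mem hP ha₀ hsum hi hx (fun j hj => hDC j hj (hproj x).1) ▸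
      (hproj x).1
  intro i hi j hj
  rw [(hCD i hi).antisymm (hDC i hi), (hCD j hj).antisymm (hDC j hj)]

theorem stmt11 {ι : Type*} (I : Finset ι) (C : ι → Set H)
    (hne : ∀ i ∈ I, (C i).Nonempty) (hcl : ∀ i ∈ I, IsClosed (C i))
    (hcv : ∀ i ∈ I, Convex ℝ (C i))
    (hint : (⋂ i ∈ I, C i).Nonempty)
    (P : ι → H → H) (hP : ∀ i ∈ I, IsProjOn (C i) (P i))
    (a : ι → ℝ) (ha : ∀ i ∈ I, 0 < a i ∧ a i ≤ 1) (hsum : ∑ i ∈ I, a i = 1)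
    (D : Set H) (hDne : D.Nonempty) (hDcl : IsClosed D) (hDcv : Convex ℝ D)
    (hproj : IsProjOn D (fun x => ∑ i ∈ I, a i • P i x)) :
    ∀ i ∈ I, ∀ j ∈ I, C i = C j :=
  stmt11_general I C hcv hint P hP a ha hsum D hproj
end

section
/- Let C be a nonempty closed convex subset of a real Hilbert space H, and let α ∈ ℝ \ {0,1}. Then αP_C is a projector onto a closed convex set if and only if C is a singleton. -/
open RealInnerProductSpace Pointwise

variable {H : Type*} [NormedAddCommGroup H] [InnerProductSpace ℝ H] [CompleteSpace H]

lemma isProjOn_varIneq {C : Set H} (hcv : Convex ℝ C) {P : H → H}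
    (hP : IsProjOn C P) (x : H) : ∀ y ∈ C, ⟪x - P x, y - P x⟫ ≤ 0 := by
  haveI : Nonempty C := ⟨⟨P x, (hP x).1⟩⟩
  have hbdd : BddBelow (Set.range fun w : C => ‖x - (w : H)‖) := by
    refine ⟨0, ?_⟩
    rintro b ⟨w, rfl⟩
    exact norm_nonneg _
  have key : ‖x - P x‖ = ⨅ w : C, ‖x - w‖ := by
    apply le_antisymm
    · exact le_ciInf fun w => (hP x).2 w w.2
    · exact ciInf_le hbdd ⟨P x, (hP x).1⟩
  exact (norm_eq_iInf_iff_real_inner_le_zero hcv (hP x).1).mp key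

theorem stmt12 (C : Set H)
    (hne : C.Nonempty) (hcl : IsClosed C) (hcv : Convex ℝ C)
    (Pc : H → H) (hPc : IsProjOn C Pc)
    (α : ℝ) (hα0 : α ≠ 0) (hα1 : α ≠ 1) :
    (∃ D : Set H, D.Nonempty ∧ IsClosed D ∧ Convex ℝ D ∧
        IsProjOn D (fun x => α • Pc x))
      ↔ ∃ c : H, C = {c} := by
  have hfix : ∀ x ∈ C, Pc x = x := by
    intro x hx
    have h := (hPc x).2 x hx
    simp only [sub_self, norm_zero] at h
    have : ‖x - Pc x‖ = 0 := le_antisymm h (norm_nonneg _)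
    have := norm_sub_eq_zero_iff.mp this
    exact this.symm
  constructor
  · rintro ⟨D, hDne, hDcl, hDcv, hT⟩
    -- α • x ∈ D for x ∈ C
    have hmem : ∀ x ∈ C, α • x ∈ D := by
      intro x hx
      have := (hT x).1
      simpa [hfix x hx] using this
    have hTfix : ∀ d ∈ D, α • Pc d = d := by
      intro d hd
      have h := (hT d).2 d hd
      simp only [sub_self, norm_zero] at h
      have : ‖d - α • Pc d‖ = 0 := le_antisymm h (norm_nonneg _)
      exact (norm_sub_eq_zero_iff.mp this).symm
    have hPcα : ∀ x ∈ C, Pc (α • x) = x := by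
      intro x hx
      have := hTfix (α • x) (hmem x hx)
      have h2 : α • Pc (α • x) = α • x := this
      exact smul_right_injective H hα0 h2
    -- key inequality: for z w ∈ C, ⟪z, w - z⟫ ≥ 0
    have hkey : ∀ z ∈ C, ∀ w ∈ C, (0:ℝ) ≤ ⟪z, w - z⟫ := by
      intro z hz w hw
      set s : ℝ := ⟪z, w - z⟫ with hs
      -- C-variational inequality at α • z, whose projection is z
      have h1 : ⟪α • z - z, w - z⟫ ≤ 0 := by
        have := isProjOn_varIneq hcv hPc (α • z) w hw
        rwa [hPcα z hz] at this
      have h1' : (α - 1) * s ≤ 0 := by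
        have heq : ⟪α • z - z, w - z⟫ = (α - 1) * s := by
          simp only [hs, inner_sub_left, real_inner_smul_left]
          ring
        linarith [heq ▸ h1]
      -- D-variational inequality at z, whose projection is α • z
      have h2 : ⟪z - α • z, α • w - α • z⟫ ≤ 0 := by
        have := isProjOn_varIneq hDcv hT z (α • w) (hmem w hw)
        simpa [hfix z hz] using this
      have h2' : α * (1 - α) * s ≤ 0 := by
        have heq : ⟪z - α • z, α • w - α • z⟫ = α * (1 - α) * s := by
          simp only [hs, inner_sub_left, inner_sub_right, real_inner_smul_left,
            real_inner_smul_right]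
          ring
        linarith [heq ▸ h2]
      by_contra hcon
      push_neg at hcon
      have hαne : α - 1 ≠ 0 := sub_ne_zero.mpr hα1
      have hα1' : (α - 1) ^ 2 > 0 := by positivity
      nlinarith [h1', h2', hcon]
    obtain ⟨c, hc⟩ := hne
    refine ⟨c, Set.eq_singleton_iff_unique_mem.mpr ⟨hc, fun x hx => ?_⟩⟩
    have h1 := hkey x hx c hc
    have h2 := hkey c hc x hx
    have : ‖x - c‖ ^ 2 ≤ 0 := by
      have e : ⟪x, c - x⟫ + ⟪c, x - c⟫ = -(‖x - c‖ ^ 2) := by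
        rw [← real_inner_self_eq_norm_sq]
        simp only [inner_sub_left, inner_sub_right, real_inner_comm x c]
        ring
      linarith
    have : ‖x - c‖ = 0 := by nlinarith [norm_nonneg (x - c), sq_nonneg ‖x - c‖]
    exact norm_sub_eq_zero_iff.mp this
  · rintro ⟨c, rfl⟩
    have hP : ∀ x, Pc x = c := fun x => (hPc x).1
    refine ⟨{α • c}, Set.singleton_nonempty _, isClosed_singleton, convex_singleton _, ?_⟩
    intro x
    refine ⟨by simp [hP x], ?_⟩
    rintro y rfl
    simp [hP x]
end

section
/- Let K₁ and K₂ be nonempty closed convex cones in a real Hilbert space H. If ⟨P_{K₁} x, P_{K₂} x⟩ = 0 for every x ∈ H, then K₁ + K₂ is closed and P_{K₁} + P_{K₂} = P_{K₁+K₂}. -/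
open RealInnerProductSpace Pointwise

variable {H : Type*} [NormedAddCommGroup H] [InnerProductSpace ℝ H] [CompleteSpace H]

/-!
For a convex cone `K`, `z = P_K x` iff `z ∈ K`, `x - z ⊥ z` and `⟪x - z, y⟫ ≤ 0` for all `y ∈ K`.
At a point `k ∈ K₂` the hypothesis reads `P₁ k ⊥ k`, which forces `P₁ k = 0`, so `⟪K₁, K₂⟫ ≤ 0`.
Since `P₁ (x - t • P₁ x) = (1 - t) • P₁ x`, the hypothesis gives `P₁ x ⊥ P₂ (x - t • P₁ x)` for
`t < 1`, hence for `t = 1` by continuity of `P₂`; together with `⟪K₁, K₂⟫ ≤ 0` this yields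
`P₂ (x - P₁ x) = P₂ x`. So `x - P₁ x - P₂ x` is nonpositive against `K₁` and `K₂` and orthogonal
to `P₁ x + P₂ x`, which makes `P₁ + P₂` the projection onto `K₁ + K₂`. That set is closed, being
the fixed-point set of its (nonexpansive) projection.
-/

section Projection

variable {E : Type*} [NormedAddCommGroup E] {C : Set E} {P : E → E}

theorem IsProjOn.apply_eq_self (hP : IsProjOn C P) {y : E} (hy : y ∈ C) : P y = y := by
  simpa [sub_eq_zero, eq_comm] using (hP y).2 y hy

theorem IsProjOn.isClosed_of_continuous (hP : IsProjOn C P) (hcont : Continuous P) :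
    IsClosed C := by
  have hfix : C = {x | P x = x} :=
    Set.ext fun x => ⟨hP.apply_eq_self, fun hx => hx ▸ (hP x).1⟩
  rw [hfix]
  exact isClosed_eq hcont continuous_id

variable [InnerProductSpace ℝ E]

theorem forall_norm_sub_le_iff_inner_sub_sub_nonpos (hC : Convex ℝ C) {x z : E} (hz : z ∈ C) :
    (∀ y ∈ C, ‖x - z‖ ≤ ‖x - y‖) ↔ ∀ y ∈ C, ⟪x - z, y - z⟫ ≤ 0 := by
  rw [← norm_eq_iInf_iff_real_inner_le_zero hC hz]
  have : Nonempty C := ⟨⟨z, hz⟩⟩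
  have hbdd : BddBelow (Set.range fun y : C => ‖x - y‖) :=
    ⟨0, Set.forall_mem_range.2 fun _ => norm_nonneg _⟩
  constructor
  · intro h
    exact le_antisymm (le_ciInf fun y => h y y.2) (ciInf_le hbdd ⟨z, hz⟩)
  · intro h y hy
    rw [h]
    exact ciInf_le hbdd ⟨y, hy⟩

theorem isProjOn_iff_inner_sub_sub_nonpos (hC : Convex ℝ C) :
    IsProjOn C P ↔ ∀ x, P x ∈ C ∧ ∀ y ∈ C, ⟪x - P x, y - P x⟫ ≤ 0 :=
  forall_congr' fun _ =>
    ⟨fun h => ⟨h.1, (forall_norm_sub_le_iff_inner_sub_sub_nonpos hC h.1).1 h.2⟩,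
      fun h => ⟨h.1, (forall_norm_sub_le_iff_inner_sub_sub_nonpos hC h.1).2 h.2⟩⟩

namespace IsProjOn

theorem inner_sub_sub_nonpos (hC : Convex ℝ C) (hP : IsProjOn C P) (x : E) {y : E}
    (hy : y ∈ C) : ⟪x - P x, y - P x⟫ ≤ 0 :=
  ((isProjOn_iff_inner_sub_sub_nonpos hC).1 hP x).2 y hy

theorem eq_of_inner_sub_sub_nonpos (hC : Convex ℝ C) (hP : IsProjOn C P) {x z : E}
    (hz : z ∈ C) (h : ∀ y ∈ C, ⟪x - z, y - z⟫ ≤ 0) : P x = z := by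
  have h₁ := hP.inner_sub_sub_nonpos hC x hz
  have h₂ := h (P x) (hP x).1
  have hsq : ⟪P x - z, P x - z⟫ = ⟪x - P x, z - P x⟫ + ⟪x - z, P x - z⟫ := by
    simp only [inner_sub_left, inner_sub_right, real_inner_comm]
    ring
  exact sub_eq_zero.1 (real_inner_self_nonpos.1 (by linarith))

theorem norm_apply_sub_apply_le (hC : Convex ℝ C) (hP : IsProjOn C P) (x y : E) :
    ‖P x - P y‖ ≤ ‖x - y‖ := by
  have h₁ := hP.inner_sub_sub_nonpos hC x (hP y).1
  have h₂ := hP.inner_sub_sub_nonpos hC y (hP x).1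
  have hsq : ‖P x - P y‖ ^ 2 ≤ ‖x - y‖ * ‖P x - P y‖ := by
    calc ‖P x - P y‖ ^ 2
        = ⟪x - y, P x - P y⟫ + ⟪x - P x, P y - P x⟫ + ⟪y - P y, P x - P y⟫ := by
          rw [← real_inner_self_eq_norm_sq]
          simp only [inner_sub_left, inner_sub_right, real_inner_comm]
          ring
      _ ≤ ⟪x - y, P x - P y⟫ := by linarith
      _ ≤ ‖x - y‖ * ‖P x - P y‖ := real_inner_le_norm _ _
  nlinarith [norm_nonneg (P x - P y), norm_nonneg (x - y)]

theorem continuous (hC : Convex ℝ C) (hP : IsProjOn C P) : Continuous P :=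
  (LipschitzWith.of_dist_le_mul (K := 1) fun x y => by
    simpa [dist_eq_norm] using hP.norm_apply_sub_apply_le hC x y).continuous

end IsProjOn

variable {K : Set E}

namespace IsProjOn

theorem zero_mem (hK : ∀ c ∈ K, ∀ t : ℝ, 0 ≤ t → t • c ∈ K) (hP : IsProjOn K P) :
    (0 : E) ∈ K := by
  simpa using hK _ (hP 0).1 0 le_rfl

theorem inner_sub_apply_eq_zero_of_cone (hcv : Convex ℝ K)
    (hK : ∀ c ∈ K, ∀ t : ℝ, 0 ≤ t → t • c ∈ K) (hP : IsProjOn K P) (x : E) :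
    ⟪x - P x, P x⟫ = 0 := by
  have h₂ := hP.inner_sub_sub_nonpos hcv x (hK _ (hP x).1 2 zero_le_two)
  have h₀ := hP.inner_sub_sub_nonpos hcv x (hP.zero_mem hK)
  rw [show (2 : ℝ) • P x - P x = P x by module] at h₂
  rw [zero_sub, inner_neg_right] at h₀
  linarith

theorem inner_sub_nonpos_of_cone (hcv : Convex ℝ K)
    (hK : ∀ c ∈ K, ∀ t : ℝ, 0 ≤ t → t • c ∈ K) (hP : IsProjOn K P) (x : E) {y : E}
    (hy : y ∈ K) : ⟪x - P x, y⟫ ≤ 0 := by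
  have h := hP.inner_sub_sub_nonpos hcv x hy
  rwa [inner_sub_right, hP.inner_sub_apply_eq_zero_of_cone hcv hK x, sub_zero] at h

theorem eq_of_cone (hcv : Convex ℝ K) (hP : IsProjOn K P) {x z : E} (hz : z ∈ K)
    (horth : ⟪x - z, z⟫ = 0) (hpolar : ∀ y ∈ K, ⟪x - z, y⟫ ≤ 0) : P x = z :=
  hP.eq_of_inner_sub_sub_nonpos hcv hz fun y hy => by
    rw [inner_sub_right, horth, sub_zero]
    exact hpolar y hy

theorem apply_sub_smul_apply (hcv : Convex ℝ K)
    (hK : ∀ c ∈ K, ∀ t : ℝ, 0 ≤ t → t • c ∈ K) (hP : IsProjOn K P) (x : E) {t : ℝ}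
    (ht : t ≤ 1) : P (x - t • P x) = (1 - t) • P x := by
  have hres : x - t • P x - (1 - t) • P x = x - P x := by module
  refine hP.eq_of_cone hcv (hK _ (hP x).1 _ (sub_nonneg.2 ht)) ?_ fun y hy => ?_
  · rw [hres, real_inner_smul_right, hP.inner_sub_apply_eq_zero_of_cone hcv hK x, mul_zero]
  · rw [hres]
    exact hP.inner_sub_nonpos_of_cone hcv hK x hy

end IsProjOn

variable {K₁ K₂ : Set E} {P₁ P₂ : E → E}

theorem inner_nonpos_of_inner_proj_eq_zero (h₁cv : Convex ℝ K₁)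
    (h₁cone : ∀ c ∈ K₁, ∀ t : ℝ, 0 ≤ t → t • c ∈ K₁)
    (hP₁ : IsProjOn K₁ P₁) (hP₂ : IsProjOn K₂ P₂) (horth : ∀ x : E, ⟪P₁ x, P₂ x⟫ = 0)
    {k₁ k₂ : E} (hk₁ : k₁ ∈ K₁) (hk₂ : k₂ ∈ K₂) : ⟪k₁, k₂⟫ ≤ 0 := by
  have hzero : P₁ k₂ = 0 := by
    have h := hP₁.inner_sub_apply_eq_zero_of_cone h₁cv h₁cone k₂
    have h₀ := horth k₂
    rw [hP₂.apply_eq_self hk₂] at h₀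
    rw [inner_sub_left, real_inner_comm, h₀, zero_sub, neg_eq_zero] at h
    exact inner_self_eq_zero.1 h
  have h := hP₁.inner_sub_nonpos_of_cone h₁cv h₁cone k₂ hk₁
  rwa [hzero, sub_zero, real_inner_comm] at h

theorem proj_sub_proj_eq_of_inner_proj_eq_zero (h₁cv : Convex ℝ K₁)
    (h₁cone : ∀ c ∈ K₁, ∀ t : ℝ, 0 ≤ t → t • c ∈ K₁) (h₂cv : Convex ℝ K₂)
    (hP₁ : IsProjOn K₁ P₁) (hP₂ : IsProjOn K₂ P₂) (horth : ∀ x : E, ⟪P₁ x, P₂ x⟫ = 0)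
    (x : E) : P₂ (x - P₁ x) = P₂ x := by
  set w := P₂ (x - P₁ x)
  have hseg : ∀ t < (1 : ℝ), ⟪P₁ x, P₂ (x - t • P₁ x)⟫ = 0 := by
    intro t ht
    have h := horth (x - t • P₁ x)
    rw [hP₁.apply_sub_smul_apply h₁cv h₁cone x ht.le, real_inner_smul_left] at h
    exact (mul_eq_zero.1 h).resolve_left (sub_ne_zero.2 ht.ne')
  have hw : ⟪P₁ x, w⟫ = 0 := by
    have hcont : Continuous fun t : ℝ => ⟪P₁ x, P₂ (x - t • P₁ x)⟫ := by
      have := hP₂.continuous h₂cv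
      fun_prop
    have hone : (1 : ℝ) ∈ closure (Set.Iio 1) := by
      rw [closure_Iio]
      exact Set.self_mem_Iic
    simpa using (isClosed_eq hcont continuous_const).closure_subset_iff.2 hseg hone
  symm
  refine hP₂.eq_of_inner_sub_sub_nonpos h₂cv (hP₂ _).1 fun y hy => ?_
  have h₁ := hP₂.inner_sub_sub_nonpos h₂cv (x - P₁ x) hy
  have h₂ := inner_nonpos_of_inner_proj_eq_zero h₁cv h₁cone hP₁ hP₂ horth (hP₁ x).1 hy
  calc ⟪x - w, y - w⟫ = ⟪x - P₁ x - w, y - w⟫ + ⟪P₁ x, y⟫ - ⟪P₁ x, w⟫ := by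
        simp only [inner_sub_left, inner_sub_right]
        ring
    _ ≤ 0 := by linarith

theorem inner_sub_add_proj_nonpos (h₁cv : Convex ℝ K₁)
    (h₁cone : ∀ c ∈ K₁, ∀ t : ℝ, 0 ≤ t → t • c ∈ K₁) (h₂cv : Convex ℝ K₂)
    (h₂cone : ∀ c ∈ K₂, ∀ t : ℝ, 0 ≤ t → t • c ∈ K₂)
    (hP₁ : IsProjOn K₁ P₁) (hP₂ : IsProjOn K₂ P₂) (horth : ∀ x : E, ⟪P₁ x, P₂ x⟫ = 0)
    (x : E) {y : E} (hy : y ∈ K₂) : ⟪x - (P₁ x + P₂ x), y⟫ ≤ 0 := by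
  have h := hP₂.inner_sub_nonpos_of_cone h₂cv h₂cone (x - P₁ x) hy
  rwa [proj_sub_proj_eq_of_inner_proj_eq_zero h₁cv h₁cone h₂cv hP₁ hP₂ horth, sub_sub] at h

end Projection

theorem stmt13_general (K₁ K₂ : Set H)
    (h₁cv : Convex ℝ K₁)
    (h₁cone : ∀ c ∈ K₁, ∀ t : ℝ, 0 ≤ t → t • c ∈ K₁)
    (h₂cv : Convex ℝ K₂)
    (h₂cone : ∀ c ∈ K₂, ∀ t : ℝ, 0 ≤ t → t • c ∈ K₂)
    (P₁ P₂ : H → H) (hP₁ : IsProjOn K₁ P₁) (hP₂ : IsProjOn K₂ P₂)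
    (horth : ∀ x : H, ⟪P₁ x, P₂ x⟫ = 0) :
    IsClosed (K₁ + K₂) ∧ IsProjOn (K₁ + K₂) (fun x => P₁ x + P₂ x) := by
  have horth' : ∀ x : H, ⟪P₂ x, P₁ x⟫ = 0 := fun x => by rw [real_inner_comm, horth]
  have hpolar₂ : ∀ x, ∀ y ∈ K₂, ⟪x - (P₁ x + P₂ x), y⟫ ≤ 0 := fun x _ hy =>
    inner_sub_add_proj_nonpos h₁cv h₁cone h₂cv h₂cone hP₁ hP₂ horth x hy
  have hpolar₁ : ∀ x, ∀ y ∈ K₁, ⟪x - (P₁ x + P₂ x), y⟫ ≤ 0 := by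
    simpa only [add_comm (P₂ _)] using
      inner_sub_add_proj_nonpos h₂cv h₂cone h₁cv h₁cone hP₂ hP₁ horth'
  have hperp : ∀ x, ⟪x - (P₁ x + P₂ x), P₁ x + P₂ x⟫ = 0 := fun x => by
    have h₁ := hP₁.inner_sub_apply_eq_zero_of_cone h₁cv h₁cone x
    have h₂ := hP₂.inner_sub_apply_eq_zero_of_cone h₂cv h₂cone x
    simp only [inner_sub_left, inner_add_left, inner_add_right] at h₁ h₂ ⊢
    linarith [horth x, horth' x]
  have hcv := h₁cv.add h₂cv
  have hQ : IsProjOn (K₁ + K₂) (fun x => P₁ x + P₂ x) := by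
    refine (isProjOn_iff_inner_sub_sub_nonpos hcv).2 fun x =>
      ⟨Set.add_mem_add (hP₁ x).1 (hP₂ x).1, ?_⟩
    rintro _ ⟨y₁, hy₁, y₂, hy₂, rfl⟩
    rw [inner_sub_right, hperp, inner_add_right]
    linarith [hpolar₁ x y₁ hy₁, hpolar₂ x y₂ hy₂]
  exact ⟨hQ.isClosed_of_continuous (hQ.continuous hcv), hQ⟩

theorem stmt13 (K₁ K₂ : Set H)
    (h₁ne : K₁.Nonempty) (h₁cl : IsClosed K₁) (h₁cv : Convex ℝ K₁)
    (h₁cone : ∀ c ∈ K₁, ∀ t : ℝ, 0 ≤ t → t • c ∈ K₁)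
    (h₂ne : K₂.Nonempty) (h₂cl : IsClosed K₂) (h₂cv : Convex ℝ K₂)
    (h₂cone : ∀ c ∈ K₂, ∀ t : ℝ, 0 ≤ t → t • c ∈ K₂)
    (P₁ P₂ : H → H) (hP₁ : IsProjOn K₁ P₁) (hP₂ : IsProjOn K₂ P₂)
    (horth : ∀ x : H, ⟪P₁ x, P₂ x⟫ = 0) :
    IsClosed (K₁ + K₂) ∧ IsProjOn (K₁ + K₂) (fun x => P₁ x + P₂ x) :=
  stmt13_general K₁ K₂ h₁cv h₁cone h₂cv h₂cone P₁ P₂ hP₁ hP₂ horth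
end

section
/- Let K₁ and K₂ be nonempty closed convex cones in a real Hilbert space H such that the sum P_{K₁} + P_{K₂} equals the projector onto some nonempty closed convex cone. Then ⟨P_{K₁} x, P_{K₂} x⟩ = 0 for every x ∈ H. -/
open RealInnerProductSpace Pointwise

variable {H : Type*} [NormedAddCommGroup H] [InnerProductSpace ℝ H] [CompleteSpace H]

lemma isProjOn_inner_eq (C : Set H) (hcv : Convex ℝ C)
    (hcone : ∀ c ∈ C, ∀ t : ℝ, 0 ≤ t → t • c ∈ C)
    (P : H → H) (hP : IsProjOn C P) (x : H) : ⟪x - P x, P x⟫ = 0 := by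
  obtain ⟨hmem, hmin⟩ := hP x
  have h0 : (0 : H) ∈ C := by
    simpa using hcone _ hmem 0 le_rfl
  have h2 : (2 : ℝ) • P x ∈ C := hcone _ hmem 2 (by norm_num)
  haveI : Nonempty C := ⟨⟨P x, hmem⟩⟩
  have heq : ‖x - P x‖ = ⨅ w : C, ‖x - w‖ := by
    refine le_antisymm (le_ciInf fun w => hmin w w.2) ?_
    exact ciInf_le ⟨0, fun _ ⟨_, h⟩ => h ▸ norm_nonneg _⟩ (⟨P x, hmem⟩ : C)
  have hvar := (norm_eq_iInf_iff_real_inner_le_zero hcv hmem).mp heq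
  have hle : ⟪x - P x, P x⟫ ≤ 0 := by
    have := hvar _ h2
    rwa [two_smul, add_sub_cancel_right] at this
  have hge : -⟪x - P x, P x⟫ ≤ 0 := by
    have := hvar _ h0
    rwa [zero_sub, inner_neg_right] at this
  linarith

theorem stmt14 (K₁ K₂ : Set H)
    (h₁ne : K₁.Nonempty) (h₁cl : IsClosed K₁) (h₁cv : Convex ℝ K₁)
    (h₁cone : ∀ c ∈ K₁, ∀ t : ℝ, 0 ≤ t → t • c ∈ K₁)
    (h₂ne : K₂.Nonempty) (h₂cl : IsClosed K₂) (h₂cv : Convex ℝ K₂)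
    (h₂cone : ∀ c ∈ K₂, ∀ t : ℝ, 0 ≤ t → t • c ∈ K₂)
    (P₁ P₂ : H → H) (hP₁ : IsProjOn K₁ P₁) (hP₂ : IsProjOn K₂ P₂)
    (hproj : ∃ K : Set H, K.Nonempty ∧ IsClosed K ∧ Convex ℝ K ∧
        (∀ c ∈ K, ∀ t : ℝ, 0 ≤ t → t • c ∈ K) ∧
        IsProjOn K (fun x => P₁ x + P₂ x)) :
    ∀ x : H, ⟪P₁ x, P₂ x⟫ = 0 := by
  obtain ⟨K, _, _, hcv, hcone, hQ⟩ := hproj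
  intro x
  have e1 := isProjOn_inner_eq K₁ h₁cv h₁cone P₁ hP₁ x
  have e2 := isProjOn_inner_eq K₂ h₂cv h₂cone P₂ hP₂ x
  have e3 := isProjOn_inner_eq K hcv hcone _ hQ x
  simp only [inner_sub_left, inner_add_left, inner_add_right] at e1 e2 e3
  have hsym : ⟪P₂ x, P₁ x⟫ = ⟪P₁ x, P₂ x⟫ := real_inner_comm _ _
  linarith
end

section
/- Let u, v ∈ H \ {0} in a real Hilbert space H, and set U = ℝ₊u and V = ℝ₊v (the closed rays generated by u and v). Then ⟨P_U x, P_V x⟩ = 0 for all x ∈ H if and only if u ∈ ℝ₋₋ v (u is a negative multiple of v) or ⟨u,v⟩ = 0. -/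
/-!
The variational inequality pins down the projection onto a ray:
`P_{ℝ₊u} x = (max ⟪x, u⟫ 0 / ‖u‖²) • u`. So `⟪P_U x, P_V x⟫` is a positive multiple of
`max ⟪x, u⟫ 0 * max ⟪x, v⟫ 0 * ⟪u, v⟫`. If `u = t • v` with `t < 0`, one of the two positive parts
always vanishes. Conversely, `x = ‖v‖ • u + ‖u‖ • v` has `⟪x, u⟫ = ‖u‖ s` and `⟪x, v⟫ = ‖v‖ s` with
`s = ‖u‖‖v‖ + ⟪u, v⟫ ≥ 0`; so `⟪u, v⟫ ≠ 0` forces `s = 0`, the equality case of Cauchy–Schwarz,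
which makes `u` a negative multiple of `v`.
-/

open RealInnerProductSpace Pointwise

variable {H : Type*} [NormedAddCommGroup H] [InnerProductSpace ℝ H] [CompleteSpace H]

section

variable {E : Type*} [NormedAddCommGroup E] [InnerProductSpace ℝ E]

theorem IsProjOn.apply_eq_of_inner_le_zero {C : Set E} {P : E → E} (hP : IsProjOn C P)
    {x q : E} (hq : q ∈ C) (h : ∀ y ∈ C, ⟪x - q, y - q⟫ ≤ 0) : P x = q := by
  obtain ⟨hpC, hpmin⟩ := hP x
  have hexpand : ‖x - P x‖ ^ 2 = ‖x - q‖ ^ 2 - 2 * ⟪x - q, P x - q⟫ + ‖P x - q‖ ^ 2 := by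
    rw [← norm_sub_sq_real, sub_sub_sub_cancel_right]
  have hmin : ‖x - P x‖ ^ 2 ≤ ‖x - q‖ ^ 2 := by gcongr; exact hpmin q hq
  have hdist : ‖P x - q‖ ^ 2 ≤ 0 := by linarith [h _ hpC]
  rw [← sub_eq_zero, ← norm_eq_zero]
  exact pow_eq_zero_iff two_ne_zero |>.mp (le_antisymm hdist (by positivity))

theorem IsProjOn.ray_apply {u : E} {P : E → E}
    (hP : IsProjOn {x : E | ∃ t : ℝ, 0 ≤ t ∧ x = t • u} P) (x : E) :
    P x = (max ⟪x, u⟫ 0 / ‖u‖ ^ 2) • u := by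
  set c := max ⟪x, u⟫ 0 / ‖u‖ ^ 2
  have hc : c * ‖u‖ ^ 2 = max ⟪x, u⟫ 0 := by
    rcases eq_or_ne u 0 with rfl | hu
    · simp
    · exact div_mul_cancel₀ _ (by positivity)
  refine hP.apply_eq_of_inner_le_zero ⟨c, by positivity, rfl⟩ ?_
  rintro _ ⟨t, ht, rfl⟩
  have hinner : ⟪x - c • u, t • u - c • u⟫ = (t - c) * (⟪x, u⟫ - max ⟪x, u⟫ 0) := by
    rw [← sub_smul, inner_smul_right, inner_sub_left, real_inner_smul_left,
      real_inner_self_eq_norm_sq, hc]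
  rw [hinner]
  rcases le_total 0 ⟪x, u⟫ with hxu | hxu
  · simp [max_eq_left hxu]
  · rw [max_eq_right hxu, show c = 0 by simp [c, max_eq_right hxu]]
    nlinarith

theorem exists_neg_smul_of_real_inner_eq_neg_norm_mul {u v : E} (hu : u ≠ 0) (hv : v ≠ 0)
    (h : ⟪u, v⟫ = -(‖u‖ * ‖v‖)) : ∃ t : ℝ, t < 0 ∧ u = t • v := by
  have hcs : ⟪u, -v⟫ = ‖u‖ * ‖-v‖ := by rw [inner_neg_right, norm_neg, h, neg_neg]
  rw [inner_eq_norm_mul_iff_real, norm_neg] at hcs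
  refine ⟨-(‖u‖ / ‖v‖), neg_neg_of_pos (by positivity), ?_⟩
  rw [neg_smul, ← smul_neg, div_eq_inv_mul, mul_smul, ← hcs,
    inv_smul_smul₀ (norm_ne_zero_iff.mpr hv)]

theorem forall_max_inner_mul_max_inner_mul_inner_eq_zero_iff (u v : E) :
    (∀ x : E, max ⟪x, u⟫ 0 * max ⟪x, v⟫ 0 * ⟪u, v⟫ = 0) ↔
      (∃ t : ℝ, t < 0 ∧ u = t • v) ∨ ⟪u, v⟫ = 0 := by
  constructor
  · intro h
    refine or_iff_not_imp_right.mpr fun huv ↦ ?_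
    have hu : u ≠ 0 := by rintro rfl; simp at huv
    have hv : v ≠ 0 := by rintro rfl; simp at huv
    set s := ‖u‖ * ‖v‖ + ⟪u, v⟫
    have hs : s = 0 := by
      refine le_antisymm (not_lt.mp fun hs ↦ huv ?_) ?_
      · have hxu : ⟪‖v‖ • u + ‖u‖ • v, u⟫ = ‖u‖ * s := by
          rw [inner_add_left, real_inner_smul_left, real_inner_smul_left,
            real_inner_self_eq_norm_sq, real_inner_comm]
          ring
        have hxv : ⟪‖v‖ • u + ‖u‖ • v, v⟫ = ‖v‖ * s := by
          rw [inner_add_left, real_inner_smul_left, real_inner_smul_left,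
            real_inner_self_eq_norm_sq]
          ring
        have hx := h (‖v‖ • u + ‖u‖ • v)
        rw [hxu, hxv, max_eq_left (by positivity), max_eq_left (by positivity)] at hx
        exact (mul_eq_zero.mp hx).resolve_left (by positivity)
      · linarith [neg_le_of_abs_le (abs_real_inner_le_norm u v)]
    exact exists_neg_smul_of_real_inner_eq_neg_norm_mul hu hv (by linarith)
  · rintro (⟨t, ht, rfl⟩ | huv) x
    · rw [real_inner_smul_right]
      rcases le_total ⟪x, v⟫ 0 with hxv | hxv
      · simp [max_eq_right hxv]
      · simp [max_eq_right (mul_nonpos_of_nonpos_of_nonneg ht.le hxv)]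
    · simp [huv]

end

theorem stmt15 (u v : H) (hu : u ≠ 0) (hv : v ≠ 0)
    (PU PV : H → H)
    (hPU : IsProjOn {x : H | ∃ t : ℝ, 0 ≤ t ∧ x = t • u} PU)
    (hPV : IsProjOn {x : H | ∃ t : ℝ, 0 ≤ t ∧ x = t • v} PV) :
    (∀ x : H, ⟪PU x, PV x⟫ = 0) ↔ ((∃ t : ℝ, t < 0 ∧ u = t • v) ∨ ⟪u, v⟫ = 0) := by
  have hnorms : ‖u‖ ^ 2 * ‖v‖ ^ 2 ≠ 0 := by positivity
  have hinner (x : H) :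
      ⟪PU x, PV x⟫ = max ⟪x, u⟫ 0 * max ⟪x, v⟫ 0 * ⟪u, v⟫ / (‖u‖ ^ 2 * ‖v‖ ^ 2) := by
    rw [hPU.ray_apply, hPV.ray_apply, real_inner_smul_left, real_inner_smul_right]
    field_simp
  simp only [hinner, div_eq_zero_iff, hnorms, or_false]
  exact forall_max_inner_mul_max_inner_mul_inner_eq_zero_iff u v
end

section
/- Let C and D be nonempty closed convex subsets of ℝ with C ∩ D = {0}. Then C + D is closed and P_C + P_D = P_{C+D}. -/
open Pointwise

/-- `P` is the metric projection (nearest-point map) onto `C ⊆ ℝ`. -/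
def IsProjOnR (C : Set ℝ) (P : ℝ → ℝ) : Prop :=
  ∀ x, P x ∈ C ∧ ∀ y ∈ C, ‖x - P x‖ ≤ ‖x - y‖

lemma key16 (C D : Set ℝ) (hCcl : IsClosed C) (hCcv : Convex ℝ C)
    (hDcl : IsClosed D) (hDcv : Convex ℝ D)
    (h0C : (0:ℝ) ∈ C) (h0D : (0:ℝ) ∈ D)
    (hC : C ⊆ Set.Ici 0) (hD : D ⊆ Set.Iic 0)
    (Pc Pd : ℝ → ℝ) (hPc : IsProjOnR C Pc) (hPd : IsProjOnR D Pd) :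
    IsClosed (C + D) ∧ IsProjOnR (C + D) (fun x => Pc x + Pd x) := by
  have hCo := hCcv.ordConnected
  have hDo := hDcv.ordConnected
  have hsum : C + D = C ∪ D := by
    apply Set.Subset.antisymm
    · rintro x ⟨c, hc, d, hd, rfl⟩
      show c + d ∈ C ∪ D
      rcases le_total 0 (c + d) with h | h
      · exact Or.inl (hCo.out h0C hc ⟨h, by have := Set.mem_Iic.mp (hD hd); linarith⟩)
      · exact Or.inr (hDo.out hd h0D ⟨by have := Set.mem_Ici.mp (hC hc); linarith, h⟩)
    · rintro x (hx | hx)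
      · exact ⟨x, hx, 0, h0D, add_zero x⟩
      · exact ⟨0, h0C, x, hx, zero_add x⟩
  have Pd0 : ∀ x, 0 ≤ x → Pd x = 0 := by
    intro x hx
    have h1 : Pd x ≤ 0 := hD (hPd x).1
    have h2 := (hPd x).2 0 h0D
    simp only [Real.norm_eq_abs, sub_zero, abs_of_nonneg hx] at h2
    have h3 := le_abs_self (x - Pd x)
    exact le_antisymm h1 (by linarith)
  have Pc0 : ∀ x, x ≤ 0 → Pc x = 0 := by
    intro x hx
    have h1 : 0 ≤ Pc x := hC (hPc x).1
    have h2 := (hPc x).2 0 h0C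
    simp only [Real.norm_eq_abs, sub_zero, abs_of_nonpos hx] at h2
    have h3 := neg_abs_le (x - Pc x)
    exact le_antisymm (by linarith) h1
  have keyC : ∀ x, 0 ≤ x → ∀ y ∈ C + D, ‖x - Pc x‖ ≤ ‖x - y‖ := by
    rintro x hx y ⟨c, hc, d, hd, rfl⟩
    have hc0 : 0 ≤ c := hC hc
    have hd0 : d ≤ 0 := hD hd
    rcases le_total 0 (c + d) with h | h
    · exact (hPc x).2 (c + d) (hCo.out h0C hc ⟨h, by linarith⟩)
    · calc ‖x - Pc x‖ ≤ ‖x - 0‖ := (hPc x).2 0 h0C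
        _ ≤ ‖x - (c + d)‖ := by
          simp only [Real.norm_eq_abs, sub_zero]
          rw [abs_of_nonneg hx, abs_of_nonneg (by linarith)]
          linarith
  have keyD : ∀ x, x ≤ 0 → ∀ y ∈ C + D, ‖x - Pd x‖ ≤ ‖x - y‖ := by
    rintro x hx y ⟨c, hc, d, hd, rfl⟩
    have hc0 : 0 ≤ c := hC hc
    have hd0 : d ≤ 0 := hD hd
    rcases le_total (c + d) 0 with h | h
    · exact (hPd x).2 (c + d) (hDo.out hd h0D ⟨by linarith, h⟩)
    · calc ‖x - Pd x‖ ≤ ‖x - 0‖ := (hPd x).2 0 h0D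
        _ ≤ ‖x - (c + d)‖ := by
          simp only [Real.norm_eq_abs, sub_zero]
          rw [abs_of_nonpos hx, abs_of_nonpos (by linarith)]
          linarith
  refine ⟨by rw [hsum]; exact hCcl.union hDcl, fun x => ?_⟩
  rcases le_total 0 x with hx | hx
  · refine ⟨⟨Pc x, (hPc x).1, Pd x, (hPd x).1, rfl⟩, fun y hy => ?_⟩
    simp only [Pd0 x hx, add_zero]
    exact keyC x hx y hy
  · refine ⟨⟨Pc x, (hPc x).1, Pd x, (hPd x).1, rfl⟩, fun y hy => ?_⟩
    simp only [Pc0 x hx, zero_add]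
    exact keyD x hx y hy

lemma symm16 (C D : Set ℝ) (P Q : ℝ → ℝ)
    (h : IsClosed (D + C) ∧ IsProjOnR (D + C) (fun x => Q x + P x)) :
    IsClosed (C + D) ∧ IsProjOnR (C + D) (fun x => P x + Q x) := by
  rw [add_comm C D]
  have he : (fun x => P x + Q x) = fun x => Q x + P x := funext fun x => add_comm _ _
  rw [he]
  exact h

theorem stmt16 (C D : Set ℝ)
    (hCne : C.Nonempty) (hCcl : IsClosed C) (hCcv : Convex ℝ C)
    (hDne : D.Nonempty) (hDcl : IsClosed D) (hDcv : Convex ℝ D)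
    (hCD : C ∩ D = {0})
    (Pc Pd : ℝ → ℝ) (hPc : IsProjOnR C Pc) (hPd : IsProjOnR D Pd) :
    IsClosed (C + D) ∧ IsProjOnR (C + D) (fun x => Pc x + Pd x) := by
  have h0 : (0:ℝ) ∈ C ∩ D := by rw [hCD]; rfl
  have h0C : (0:ℝ) ∈ C := h0.1
  have h0D : (0:ℝ) ∈ D := h0.2
  have hCo := hCcv.ordConnected
  have hDo := hDcv.ordConnected
  have hpos : ¬ ((∃ c ∈ C, 0 < c) ∧ (∃ d ∈ D, 0 < d)) := by
    rintro ⟨⟨c, hc, hc0⟩, ⟨d, hd, hd0⟩⟩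
    have hm : min c d ∈ C ∩ D :=
      ⟨hCo.out h0C hc ⟨(lt_min hc0 hd0).le, min_le_left c d⟩,
       hDo.out h0D hd ⟨(lt_min hc0 hd0).le, min_le_right c d⟩⟩
    rw [hCD, Set.mem_singleton_iff] at hm
    exact absurd hm (ne_of_gt (lt_min hc0 hd0))
  have hneg : ¬ ((∃ c ∈ C, c < 0) ∧ (∃ d ∈ D, d < 0)) := by
    rintro ⟨⟨c, hc, hc0⟩, ⟨d, hd, hd0⟩⟩
    have hm : max c d ∈ C ∩ D :=
      ⟨hCo.out hc h0C ⟨le_max_left c d, (max_lt hc0 hd0).le⟩,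
       hDo.out hd h0D ⟨le_max_right c d, (max_lt hc0 hd0).le⟩⟩
    rw [hCD, Set.mem_singleton_iff] at hm
    exact absurd hm (ne_of_lt (max_lt hc0 hd0))
  by_cases hDz : D = {0}
  · subst hDz
    have hPd0 : ∀ x, Pd x = 0 := fun x => (hPd x).1
    have hadd : C + ({0} : Set ℝ) = C := by simp [Set.add_singleton]
    rw [hadd]
    refine ⟨hCcl, fun x => ?_⟩
    simpa [hPd0 x] using hPc x
  by_cases hCz : C = {0}
  · subst hCz
    have hPc0 : ∀ x, Pc x = 0 := fun x => (hPc x).1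
    have hadd : ({0} : Set ℝ) + D = D := by simp [Set.singleton_add]
    rw [hadd]
    refine ⟨hDcl, fun x => ?_⟩
    simpa [hPc0 x] using hPd x
  obtain ⟨c, hc, hc0⟩ : ∃ c ∈ C, c ≠ 0 := by
    by_contra h; push_neg at h
    exact hCz (Set.eq_singleton_iff_unique_mem.mpr ⟨h0C, h⟩)
  obtain ⟨d, hd, hd0⟩ : ∃ d ∈ D, d ≠ 0 := by
    by_contra h; push_neg at h
    exact hDz (Set.eq_singleton_iff_unique_mem.mpr ⟨h0D, h⟩)
  rcases hc0.lt_or_gt with hcneg | hcpos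
  · -- c < 0, so D ⊆ Ici 0, d > 0, C ⊆ Iic 0
    have hDpos : D ⊆ Set.Ici 0 := fun y hy =>
      le_of_not_gt fun h => hneg ⟨⟨c, hc, hcneg⟩, ⟨y, hy, h⟩⟩
    have hd' : 0 < d := hd0.lt_or_gt.resolve_left fun h => absurd (hDpos hd) (not_le.mpr h)
    have hCneg : C ⊆ Set.Iic 0 := fun y hy =>
      le_of_not_gt fun h => hpos ⟨⟨y, hy, h⟩, ⟨d, hd, hd'⟩⟩
    exact symm16 C D Pc Pd
      (key16 D C hDcl hDcv hCcl hCcv h0D h0C hDpos hCneg Pd Pc hPd hPc)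
  · -- c > 0, so D ⊆ Iic 0, d < 0, C ⊆ Ici 0
    have hDneg : D ⊆ Set.Iic 0 := fun y hy =>
      le_of_not_gt fun h => hpos ⟨⟨c, hc, hcpos⟩, ⟨y, hy, h⟩⟩
    have hd' : d < 0 := hd0.lt_or_gt.resolve_right fun h => absurd (hDneg hd) (not_le.mpr h)
    have hCpos : C ⊆ Set.Ici 0 := fun y hy =>
      le_of_not_gt fun h => hneg ⟨⟨y, hy, h⟩, ⟨d, hd, hd'⟩⟩
    exact key16 C D hCcl hCcv hDcl hDcv h0C h0D hCpos hDneg Pc Pd hPc hPd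
end

section
/- Let C and D be nonempty closed convex subsets of ℝ with C ≠ {0}, D ≠ {0}, and suppose that P_C + P_D is a projector onto a closed convex subset of ℝ. Then exactly one of the following holds: (i) both C and D are singletons; or (ii) neither C nor D is a singleton and C ∩ D = {0}. -/
/-! A projector `P` onto a convex subset of `ℝ` is firmly nonexpansive:
`(P x - P y)² ≤ (x - y) (P x - P y)`. If a projector `T` acts as a translation `s ↦ s + q` at two
distinct points, it fixes `s + q ∈ range T`, and firm nonexpansiveness between `s + q` and the
other point forces `q = 0`.

If `C = {c}` and `D` has two points, `T = P_C + P_D` is translation by `c` on `D`, so `c = 0`.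
If both have two points, firm nonexpansiveness of `T` and of `P_D` together make `P_D` constant on
`C`, so `T` is a translation on `C` and `P_D = 0` on `C`; symmetrically `P_C = 0` on `D`. Hence
`0 ∈ C ∩ D`, and any `x ∈ C ∩ D` satisfies `x = P_D x = 0`. -/

namespace IsProjOnR

variable {C : Set ℝ} {P : ℝ → ℝ}

lemma apply_of_mem (h : IsProjOnR C P) {x : ℝ} (hx : x ∈ C) : P x = x := by
  simpa [sub_eq_zero, eq_comm] using (h x).2 x hx

lemma mul_sub_nonpos (hC : Convex ℝ C) (h : IsProjOnR C P) (x : ℝ) {y : ℝ} (hy : y ∈ C) :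
    (x - P x) * (y - P x) ≤ 0 := by
  have : Nonempty C := ⟨⟨y, hy⟩⟩
  have hmin : ‖x - P x‖ = ⨅ w : C, ‖x - w‖ :=
    le_antisymm (le_ciInf fun w => (h x).2 w w.2)
      (ciInf_le (f := fun w : C => ‖x - w‖) ⟨0, Set.forall_mem_range.2 fun _ => norm_nonneg _⟩
        ⟨P x, (h x).1⟩)
  simpa [mul_comm] using (norm_eq_iInf_iff_real_inner_le_zero hC (h x).1).1 hmin y hy

lemma sq_sub_le_mul_sub (hC : Convex ℝ C) (h : IsProjOnR C P) (x y : ℝ) :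
    (P x - P y) ^ 2 ≤ (x - y) * (P x - P y) := by
  nlinarith [h.mul_sub_nonpos hC x (h y).1, h.mul_sub_nonpos hC y (h x).1]

lemma eq_zero_of_apply_eq_add (hC : Convex ℝ C) (h : IsProjOnR C P) {a b q : ℝ}
    (ha : P a = a + q) (hb : P b = b + q) (hab : a ≠ b) : q = 0 := by
  have key : ∀ s t, P s = s + q → P t = t + q → 0 ≤ q * (s - t) := by
    intro s t hs ht
    have hfix : P (s + q) = s + q := hs ▸ h.apply_of_mem (h s).1
    have := h.sq_sub_le_mul_sub hC (s + q) t
    rw [hfix, ht] at this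
    nlinarith
  have hq : q * (a - b) = 0 := le_antisymm (by linarith [key b a hb ha]) (key a b ha hb)
  exact (mul_eq_zero.1 hq).resolve_right (sub_ne_zero.2 hab)

end IsProjOnR

section SumOfProjectors

variable {C D E : Set ℝ} {Pc Pd : ℝ → ℝ}

lemma eq_zero_of_eq_singleton_of_nontrivial (hEcv : Convex ℝ E) (hPc : IsProjOnR C Pc)
    (hPd : IsProjOnR D Pd) (hproj : IsProjOnR E (fun x => Pc x + Pd x)) {c : ℝ} (hc : C = {c})
    (hD : D.Nontrivial) : c = 0 := by
  obtain ⟨a, ha, b, hb, hab⟩ := hD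
  have hPc_const : ∀ x, Pc x = c := fun x => by simpa [hc] using (hPc x).1
  have htrans : ∀ x ∈ D, Pc x + Pd x = x + c := fun x hx => by
    rw [hPc_const, hPd.apply_of_mem hx, add_comm]
  exact hproj.eq_zero_of_apply_eq_add hEcv (htrans a ha) (htrans b hb) hab

lemma apply_eq_apply_of_add_isProjOnR (hDcv : Convex ℝ D) (hEcv : Convex ℝ E)
    (hPc : IsProjOnR C Pc) (hPd : IsProjOnR D Pd) (hproj : IsProjOnR E (fun x => Pc x + Pd x))
    {x y : ℝ} (hx : x ∈ C) (hy : y ∈ C) : Pd x = Pd y := by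
  have hT := hproj.sq_sub_le_mul_sub hEcv x y
  simp only [hPc.apply_of_mem hx, hPc.apply_of_mem hy] at hT
  nlinarith [hPd.sq_sub_le_mul_sub hDcv x y]

lemma eq_zero_on_of_nontrivial (hDcv : Convex ℝ D) (hEcv : Convex ℝ E)
    (hPc : IsProjOnR C Pc) (hPd : IsProjOnR D Pd) (hproj : IsProjOnR E (fun x => Pc x + Pd x))
    (hC : C.Nontrivial) : ∀ x ∈ C, Pd x = 0 := by
  obtain ⟨a, ha, b, hb, hab⟩ := hC
  have hconst : ∀ {x}, x ∈ C → Pd x = Pd a := fun hx =>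
    apply_eq_apply_of_add_isProjOnR hDcv hEcv hPc hPd hproj hx ha
  have htrans : ∀ x ∈ C, Pc x + Pd x = x + Pd a := fun x hx => by
    rw [hPc.apply_of_mem hx, hconst hx]
  have hq := hproj.eq_zero_of_apply_eq_add hEcv (htrans a ha) (htrans b hb) hab
  exact fun x hx => (hconst hx).trans hq

lemma inter_eq_singleton_zero (hPc : IsProjOnR C Pc) (hPd : IsProjOnR D Pd)
    (hC : C.Nonempty) (hD : D.Nonempty) (hPdC : ∀ x ∈ C, Pd x = 0) (hPcD : ∀ x ∈ D, Pc x = 0) :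
    C ∩ D = {0} := by
  obtain ⟨a, ha⟩ := hC
  obtain ⟨b, hb⟩ := hD
  ext x
  constructor
  · rintro ⟨hxC, hxD⟩
    rw [Set.mem_singleton_iff, ← hPd.apply_of_mem hxD, hPdC x hxC]
  · rintro rfl
    exact ⟨hPcD b hb ▸ (hPc b).1, hPdC a ha ▸ (hPd a).1⟩

end SumOfProjectors

theorem stmt17_general (C D : Set ℝ)
    (hCne : C.Nonempty) (hCcv : Convex ℝ C)
    (hDne : D.Nonempty) (hDcv : Convex ℝ D)
    (hC0 : C ≠ {0}) (hD0 : D ≠ {0})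
    (Pc Pd : ℝ → ℝ) (hPc : IsProjOnR C Pc) (hPd : IsProjOnR D Pd)
    (E : Set ℝ) (hEcv : Convex ℝ E)
    (hproj : IsProjOnR E (fun x => Pc x + Pd x)) :
    Xor' ((∃ c : ℝ, C = {c}) ∧ (∃ d : ℝ, D = {d}))
      ((¬ ∃ c : ℝ, C = {c}) ∧ (¬ ∃ d : ℝ, D = {d}) ∧ C ∩ D = {0}) := by
  have hproj' : IsProjOnR E (fun x => Pd x + Pc x) := by simpa only [add_comm] using hproj
  rcases hCne.exists_eq_singleton_or_nontrivial with ⟨c, hc⟩ | hC <;>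
    rcases hDne.exists_eq_singleton_or_nontrivial with ⟨d, hd⟩ | hD
  · exact Or.inl ⟨⟨⟨c, hc⟩, ⟨d, hd⟩⟩, fun h => h.1 ⟨c, hc⟩⟩
  · exact absurd (eq_zero_of_eq_singleton_of_nontrivial hEcv hPc hPd hproj hc hD ▸ hc) hC0
  · exact absurd (eq_zero_of_eq_singleton_of_nontrivial hEcv hPd hPc hproj' hd hC ▸ hd) hD0
  · have hCD := inter_eq_singleton_zero hPc hPd hCne hDne
      (eq_zero_on_of_nontrivial hDcv hEcv hPc hPd hproj hC)
      (eq_zero_on_of_nontrivial hCcv hEcv hPd hPc hproj' hD)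
    exact Or.inr ⟨⟨fun ⟨_, h⟩ => hC.ne_singleton h, fun ⟨_, h⟩ => hD.ne_singleton h, hCD⟩,
      fun ⟨⟨_, h⟩, _⟩ => hC.ne_singleton h⟩

theorem stmt17 (C D : Set ℝ)
    (hCne : C.Nonempty) (hCcl : IsClosed C) (hCcv : Convex ℝ C)
    (hDne : D.Nonempty) (hDcl : IsClosed D) (hDcv : Convex ℝ D)
    (hC0 : C ≠ {0}) (hD0 : D ≠ {0})
    (Pc Pd : ℝ → ℝ) (hPc : IsProjOnR C Pc) (hPd : IsProjOnR D Pd)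
    (E : Set ℝ) (hEne : E.Nonempty) (hEcl : IsClosed E) (hEcv : Convex ℝ E)
    (hproj : IsProjOnR E (fun x => Pc x + Pd x)) :
    Xor' ((∃ c : ℝ, C = {c}) ∧ (∃ d : ℝ, D = {d}))
      ((¬ ∃ c : ℝ, C = {c}) ∧ (¬ ∃ d : ℝ, D = {d}) ∧ C ∩ D = {0}) :=
  stmt17_general C D hCne hCcv hDne hDcv hC0 hD0 Pc Pd hPc hPd E hEcv hproj
end

section
/- Let C be a nonempty closed convex subset of a real Hilbert space H and let K be a nonempty closed convex cone in H. If there exists a closed convex set D such that P_C + P_K = P_D, then C ⊆ K⊖, the polar cone of K. -/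
open RealInnerProductSpace Pointwise

variable {H : Type*} [NormedAddCommGroup H] [InnerProductSpace ℝ H] [CompleteSpace H]

/-- Variational inequality for a metric projection. -/
lemma isProjOn_vi {S : Set H} {P : H → H} (hP : IsProjOn S P) (hcv : Convex ℝ S)
    (x : H) {y : H} (hy : y ∈ S) : ⟪x - P x, y - P x⟫ ≤ 0 := by
  obtain ⟨hmem, hmin⟩ := hP x
  haveI : Nonempty S := ⟨⟨P x, hmem⟩⟩
  have hinf : ‖x - P x‖ = ⨅ w : S, ‖x - w‖ := by
    refine le_antisymm ?_ ?_
    · exact le_ciInf fun w => hmin w w.2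
    · exact ciInf_le_of_le ⟨0, fun _ ⟨_, h⟩ => h ▸ norm_nonneg _⟩ ⟨P x, hmem⟩ le_rfl
  exact ((norm_eq_iInf_iff_real_inner_le_zero hcv hmem).mp hinf) y hy

/-- Uniqueness: any point satisfying the variational inequality is the projection. -/
lemma isProjOn_unique {S : Set H} {P : H → H} (hP : IsProjOn S P)
    (x : H) {q : H} (hq : q ∈ S) (hvi : ∀ w ∈ S, ⟪x - q, w - q⟫ ≤ 0) : P x = q := by
  obtain ⟨hmem, hmin⟩ := hP x
  have h1 : ‖x - P x‖ ≤ ‖x - q‖ := hmin q hq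
  have h2 : ⟪x - q, P x - q⟫ ≤ 0 := hvi _ hmem
  have hexp : ‖x - P x‖ ^ 2 = ‖x - q‖ ^ 2 - 2 * ⟪x - q, P x - q⟫ + ‖P x - q‖ ^ 2 := by
    have : x - P x = (x - q) - (P x - q) := by abel
    rw [this, norm_sub_sq_real]
  have h4 : ‖P x - q‖ = 0 := by
    nlinarith [norm_nonneg (P x - q), norm_nonneg (x - P x), norm_nonneg (x - q)]
  exact sub_eq_zero.mp (norm_eq_zero.mp h4)

theorem stmt18 (C K : Set H)
    (hCne : C.Nonempty) (hCcl : IsClosed C) (hCcv : Convex ℝ C)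
    (hKne : K.Nonempty) (hKcl : IsClosed K) (hKcv : Convex ℝ K)
    (hKcone : ∀ c ∈ K, ∀ t : ℝ, 0 ≤ t → t • c ∈ K)
    (Pc Pk : H → H) (hPc : IsProjOn C Pc) (hPk : IsProjOn K Pk)
    (hproj : ∃ D : Set H, D.Nonempty ∧ IsClosed D ∧ Convex ℝ D ∧
        IsProjOn D (fun x => Pc x + Pk x)) :
    C ⊆ polarCone K := by
  obtain ⟨D, hDne, hDcl, hDcv, hQ⟩ := hproj
  obtain ⟨k0, hk0⟩ := hKne
  have h0K : (0 : H) ∈ K := by simpa using hKcone k0 hk0 0 le_rfl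
  have hKadd : ∀ a ∈ K, ∀ b ∈ K, a + b ∈ K := by
    intro a ha b hb
    have h := hKcv ha hb (by norm_num : (0:ℝ) ≤ 1/2) (by norm_num : (0:ℝ) ≤ 1/2) (by norm_num)
    have := hKcone _ h 2 (by norm_num)
    simpa [smul_smul, smul_add] using this
  have hPk0 : Pk 0 = 0 := by
    have h := (hPk 0).2 0 h0K
    have : ‖(0:H) - Pk 0‖ = 0 := le_antisymm (by simpa using h) (norm_nonneg _)
    simpa [eq_comm, neg_eq_zero] using norm_eq_zero.mp this
  intro c hc
  set p := Pk c with hp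
  have hpK : p ∈ K := (hPk c).1
  have hviK : ∀ w ∈ K, ⟪c - p, w - p⟫ ≤ 0 := fun w hw => isProjOn_vi hPk hKcv c hw
  have horth : ⟪c - p, p⟫ = 0 := by
    have h2 := hviK _ (hKcone p hpK 2 (by norm_num))
    have h12 := hviK _ (hKcone p hpK (1/2) (by norm_num))
    have e2 : (2:ℝ) • p - p = p := by module
    have e12 : (1/2 : ℝ) • p - p = -((1/2 : ℝ) • p) := by module
    rw [e2] at h2
    rw [e12, inner_neg_right, real_inner_smul_right] at h12
    linarith
  have hpolar : ∀ w ∈ K, ⟪c - p, w⟫ ≤ 0 := by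
    intro w hw
    have := hviK _ (hKadd p hpK w hw)
    simpa using this
  have hPcc : Pc c = c := by
    have h := (hPc c).2 c hc
    have : ‖c - Pc c‖ = 0 := le_antisymm (by simpa using h) (norm_nonneg _)
    exact (sub_eq_zero.mp (norm_eq_zero.mp this)).symm
  -- For t ≥ 0, Pk (c + t•p) = (1+t)•p
  have hPkt : ∀ t : ℝ, 0 ≤ t → Pk (c + t • p) = (1 + t) • p := by
    intro t ht
    refine isProjOn_unique hPk _ (hKcone p hpK (1 + t) (by linarith)) ?_
    intro w hw
    have e : c + t • p - (1 + t) • p = c - p := by module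
    rw [e]
    have e2 : ⟪c - p, w - (1 + t) • p⟫ = ⟪c - p, w⟫ - (1 + t) * ⟪c - p, p⟫ := by
      rw [inner_sub_right, real_inner_smul_right]
    rw [e2, horth]
    simpa using hpolar w hw
  -- For t ≥ 0, Pc (c + t•p) = c
  have hPct : ∀ t : ℝ, 0 ≤ t → Pc (c + t • p) = c := by
    intro t ht
    set a := Pc (c + t • p) with ha
    have h1 : ⟪c + t • p - a, c - a⟫ ≤ 0 := isProjOn_vi hPc hCcv _ hc
    have hQc : Pc c + Pk c ∈ D := (hQ c).1
    have hQt : Pc (c + t • p) + Pk (c + t • p) ∈ D := (hQ (c + t • p)).1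
    have hQcD : c + p ∈ D := by rwa [hPcc, ← hp] at hQc
    have hQtD : a + (1 + t) • p ∈ D := by rwa [← ha, hPkt t ht] at hQt
    -- VI of Q at c with d = a + (1+t)•p
    have h2 : ⟪c - (c + p), (a + (1 + t) • p) - (c + p)⟫ ≤ 0 := by
      have h := isProjOn_vi hQ hDcv c hQtD
      simpa only [hPcc, ← hp] using h
    -- VI of Q at c + t•p with d = c + p
    have h3 : ⟪c + t • p - (a + (1 + t) • p), (c + p) - (a + (1 + t) • p)⟫ ≤ 0 := by
      have h := isProjOn_vi hQ hDcv (c + t • p) hQcD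
      simpa only [← ha, hPkt t ht] using h
    have e1 : c + t • p - a = (c - a) + t • p := by module
    rw [e1, inner_add_left, real_inner_smul_left] at h1
    have e2 : c - (c + p) = -p := by abel
    have e2' : (a + (1 + t) • p) - (c + p) = (a - c) + t • p := by module
    rw [e2, e2', inner_neg_left, inner_add_right, real_inner_smul_right] at h2
    have e3 : c + t • p - (a + (1 + t) • p) = (c - a) - p := by module
    have e3' : (c + p) - (a + (1 + t) • p) = (c - a) - t • p := by module
    rw [e3, e3'] at h3
    have e3'' : ⟪(c - a) - p, (c - a) - t • p⟫
        = ⟪c - a, c - a⟫ - t * ⟪c - a, p⟫ - ⟪p, c - a⟫ + t * ⟪p, p⟫ := by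
      simp only [inner_sub_left, inner_sub_right, real_inner_smul_right]; ring
    rw [e3''] at h3
    have hsym : ⟪c - a, p⟫ = ⟪p, c - a⟫ := real_inner_comm _ _
    have hpca : ⟪p, a - c⟫ = -⟪p, c - a⟫ := by
      rw [← inner_neg_right]; congr 1; abel
    rw [hpca] at h2
    have hsym' : t * ⟪c - a, p⟫ = t * ⟪p, c - a⟫ := by rw [hsym]
    have hzero : ⟪c - a, c - a⟫ ≤ 0 := by linarith
    have hca : c - a = 0 :=
      inner_self_eq_zero.mp (le_antisymm hzero real_inner_self_nonneg)
    exact (sub_eq_zero.mp hca).symm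
  -- derive p = 0
  have hd0 : Pc 0 ∈ D := by
    have h := (hQ 0).1
    simpa [hPk0] using h
  have hpzero : p = 0 := by
    by_contra hne
    have hpp : (0:ℝ) < ⟪p, p⟫ :=
      lt_of_le_of_ne real_inner_self_nonneg (fun h => hne (inner_self_eq_zero.mp h.symm))
    set M := ⟪p, Pc 0 - c⟫ with hM
    obtain ⟨t, ht0, htM⟩ : ∃ t : ℝ, 0 ≤ t ∧ M < (1 + t) * ⟪p, p⟫ := by
      refine ⟨max 0 (M / ⟪p, p⟫), le_max_left _ _, ?_⟩
      have h1 : M / ⟪p, p⟫ ≤ max 0 (M / ⟪p, p⟫) := le_max_right _ _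
      have h2 : M ≤ (max 0 (M / ⟪p, p⟫)) * ⟪p, p⟫ := by
        rw [div_le_iff₀ hpp] at h1; linarith
      nlinarith
    have hvi := isProjOn_vi hQ hDcv (c + t • p) hd0
    simp only [hPct t ht0, hPkt t ht0] at hvi
    have e : c + t • p - (c + (1 + t) • p) = -p := by module
    have e2 : Pc 0 - (c + (1 + t) • p) = (Pc 0 - c) - (1 + t) • p := by abel
    rw [e, e2, inner_neg_left, inner_sub_right, real_inner_smul_right] at hvi
    rw [← hM] at hvi
    linarith
  intro k hk
  have h := hviK k hk
  rw [hpzero] at h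
  simp only [sub_zero] at h
  calc ⟪k, c⟫ = ⟪c, k⟫ := real_inner_comm _ _
    _ ≤ 0 := h
end
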